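/- arXiv:1512.04770 — 4 statements merged into one kernel-verified Lean document; each statement's English description precedes it below -/
import Mathlib

section
/- Let T be a locally finite rooted tree with Σ_{k∈V} μ_k < ∞. Define λ_p^{(n)} = inf { D_p(f) : μ(|f|^p) = 1, f_o = 0, f_i = f_{i*} for all i with |i| ≥ n+1 }. Then λ_p^{(n)} is nonincreasing in n and λ_p^{(n)} ↓ λ_p as n → N, where λ_p = inf { D_p(f) : μ(|f|^p) = 1, f_o = 0 } and N is the maximal level of T. -/
open scoped ENNReal Classical BigOperators

/-- A rooted tree given by a parent map and a level function. -/
structure PTree (V : Type) where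
  root : V
  par : V → V
  level : V → ℕ
  level_root : level root = 0
  par_root : par root = root
  level_par : ∀ i, i ≠ root → level i = level (par i) + 1
  par_iter_root : ∀ i, par^[level i] i = root

/-- `T.anc k j` : `k` is an ancestor of `j` (or `j` itself), i.e. `j` lies in
the subtree `V_k` rooted at `k`. -/
def PTree.anc {V : Type} (T : PTree V) (k j : V) : Prop := ∃ m, T.par^[m] j = k

/-- The Dirichlet form `D_p(f) = Σ_{i ≠ o} v_i |f_i - f_{i*}|^p` (with values in `ℝ≥0∞`). -/
noncomputable def Dp {V : Type} (T : PTree V) (v : V → ℝ) (p : ℝ) (f : V → ℝ) : ℝ≥0∞ :=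
  ∑' i : {i : V // i ≠ T.root}, ENNReal.ofReal (v i.1 * |f i.1 - f (T.par i.1)| ^ p)

/-- The principal Dirichlet eigenvalue
`λ_p = inf { D_p(f) : μ(|f|^p) = 1, f_o = 0 }`. -/
noncomputable def lamP {V : Type} (T : PTree V) (v μ : V → ℝ) (p : ℝ) : ℝ≥0∞ :=
  ⨅ (f : V → ℝ) (_ : f T.root = 0)
    (_ : (∑' k : V, ENNReal.ofReal (μ k * |f k| ^ p)) = 1), Dp T v p f

/-- The approximating eigenvalue `λ_p^{(n)}`: the infimum is taken over test
functions that are constant along edges beyond level `n`. -/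
noncomputable def lamPn {V : Type} (T : PTree V) (v μ : V → ℝ) (p : ℝ) (n : ℕ) : ℝ≥0∞ :=
  ⨅ (f : V → ℝ) (_ : f T.root = 0)
    (_ : (∑' k : V, ENNReal.ofReal (μ k * |f k| ^ p)) = 1)
    (_ : ∀ i : V, n + 1 ≤ T.level i → f i = f (T.par i)), Dp T v p f

/-!
Truncating an admissible `f` at level `m` (keep `f` up to level `m`, then extend it constantly
down the tree) and clamping its values to `[-m, m]` can only decrease `D_p`, produces a
function of finite mass thanks to `μ(V) < ∞`, and agrees with `f` on any finite set of
vertices once `m` is large. After normalisation it is admissible for `λ_p^{(m)}`, so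
`(⨅ n, λ_p^{(n)}) · μ(|f_m|^p) ≤ D_p(f)` for every `m`, while `sup_m μ(|f_m|^p) ≥ μ(|f|^p) = 1`.
-/

open Filter

noncomputable def lpMass {V : Type} (μ : V → ℝ) (p : ℝ) (f : V → ℝ) : ℝ≥0∞ :=
  ∑' k, ENNReal.ofReal (μ k * |f k| ^ p)

lemma ofReal_mul_le_ofReal_mul (w : ℝ) {a b : ℝ} (ha : 0 ≤ a) (hab : a ≤ b) :
    ENNReal.ofReal (w * a) ≤ ENNReal.ofReal (w * b) := by
  rw [ENNReal.ofReal_mul' ha, ENNReal.ofReal_mul' (ha.trans hab)]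
  gcongr

lemma tsum_ofReal_mul_abs_div_rpow {ι : Type*} (w x : ι → ℝ) (p : ℝ) {c : ℝ} (hc : 0 < c) :
    ∑' k, ENNReal.ofReal (w k * |x k / c| ^ p)
      = (∑' k, ENNReal.ofReal (w k * |x k| ^ p)) / ENNReal.ofReal (c ^ p) := by
  simp_rw [abs_div, abs_of_pos hc, Real.div_rpow (abs_nonneg _) hc.le, ← mul_div_assoc,
    ENNReal.ofReal_div_of_pos (Real.rpow_pos_of_pos hc p), div_eq_mul_inv,
    ENNReal.tsum_mul_right]

lemma tsum_le_iSup_tsum_of_eventually_eq {ι : Type*} (a : ℕ → ι → ℝ≥0∞) (b : ι → ℝ≥0∞)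
    (h : ∀ k, ∀ᶠ m in atTop, a m k = b k) : ∑' k, b k ≤ ⨆ m, ∑' k, a m k := by
  rw [ENNReal.tsum_eq_iSup_sum]
  refine iSup_le fun s => ?_
  obtain ⟨m, hm⟩ := ((eventually_all_finset s).2 fun k _ => h k).exists
  calc ∑ k ∈ s, b k = ∑ k ∈ s, a m k := Finset.sum_congr rfl fun k hk => (hm k hk).symm
    _ ≤ ∑' k, a m k := ENNReal.sum_le_tsum s
    _ ≤ ⨆ m, ∑' k, a m k := le_iSup (fun m => ∑' k, a m k) m

lemma exists_pos_ofReal_rpow_eq {S : ℝ≥0∞} (hS0 : S ≠ 0) (hS : S ≠ ⊤) {p : ℝ} (hp : p ≠ 0) :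
    ∃ c : ℝ, 0 < c ∧ ENNReal.ofReal (c ^ p) = S :=
  ⟨S.toReal ^ p⁻¹, Real.rpow_pos_of_pos (ENNReal.toReal_pos hS0 hS) _, by
    rw [Real.rpow_inv_rpow ENNReal.toReal_nonneg hp, ENNReal.ofReal_toReal hS]⟩

lemma lpMass_div_const {V : Type} (μ : V → ℝ) (p : ℝ) (f : V → ℝ) {c : ℝ} (hc : 0 < c) :
    lpMass μ p (fun k => f k / c) = lpMass μ p f / ENNReal.ofReal (c ^ p) :=
  tsum_ofReal_mul_abs_div_rpow μ f p hc

lemma lpMass_ne_top_of_abs_le {V : Type} {μ : V → ℝ} {p : ℝ} (hp : 0 ≤ p)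
    (hmass : (∑' k : V, ENNReal.ofReal (μ k)) ≠ ⊤) {f : V → ℝ} {M : ℝ} (hM : ∀ k, |f k| ≤ M) :
    lpMass μ p f ≠ ⊤ := by
  refine ne_top_of_le_ne_top (ENNReal.mul_ne_top (ENNReal.ofReal_ne_top (r := M ^ p)) hmass) ?_
  rw [lpMass, ← ENNReal.tsum_mul_left]
  refine ENNReal.tsum_le_tsum fun k => ?_
  have hM0 : 0 ≤ M := (abs_nonneg _).trans (hM k)
  rw [← ENNReal.ofReal_mul (Real.rpow_nonneg hM0 p), mul_comm (M ^ p)]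
  exact ofReal_mul_le_ofReal_mul _ (by positivity) (Real.rpow_le_rpow (abs_nonneg _) (hM k) hp)

noncomputable def clampTo (m : ℕ) (x : ℝ) : ℝ :=
  Set.projIcc (-(m : ℝ)) m (neg_le_self m.cast_nonneg) x

lemma abs_clampTo_le (m : ℕ) (x : ℝ) : |clampTo m x| ≤ m :=
  abs_le.2 (Set.projIcc _ _ _ x).2

lemma clampTo_of_abs_le {m : ℕ} {x : ℝ} (hx : |x| ≤ m) : clampTo m x = x := by
  rw [clampTo, Set.projIcc_of_mem _ (abs_le.1 hx)]

lemma lipschitzWith_clampTo (m : ℕ) : LipschitzWith 1 (clampTo m) :=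
  by
  have h := (LipschitzWith.subtype_val _).comp (LipschitzWith.projIcc (neg_le_self m.cast_nonneg))
  rw [mul_one] at h
  exact h

namespace PTree

variable {V : Type} (T : PTree V)

lemma level_par_eq_sub_one (k : V) : T.level (T.par k) = T.level k - 1 := by
  by_cases hk : k = T.root
  · subst hk; rw [T.par_root, T.level_root]
  · have := T.level_par k hk; omega

/-- The truncation `f^{(n)}`: the value of `h` at the ancestor of `k` on level `min (|k|, n)`. -/
def trunc (n : ℕ) (h : V → ℝ) : V → ℝ :=
  fun k => h (T.par^[T.level k - n] k)

variable {T}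

lemma trunc_of_level_le {n : ℕ} (h : V → ℝ) {k : V} (hk : T.level k ≤ n) :
    T.trunc n h k = h k := by
  rw [trunc, Nat.sub_eq_zero_of_le hk, Function.iterate_zero_apply]

lemma trunc_eq_trunc_par {n : ℕ} (h : V → ℝ) {i : V} (hi : n + 1 ≤ T.level i) :
    T.trunc n h i = T.trunc n h (T.par i) := by
  rw [trunc, trunc, T.level_par_eq_sub_one, show T.level i - n = T.level i - 1 - n + 1 by omega,
    Function.iterate_succ_apply]

lemma trunc_clampTo_eventually_eq (f : V → ℝ) (k : V) :
    ∀ᶠ m in atTop, T.trunc m (clampTo m ∘ f) k = f k := by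
  filter_upwards [eventually_ge_atTop (T.level k),
    tendsto_natCast_atTop_atTop.eventually_ge_atTop |f k|] with m hlev habs
  rw [trunc_of_level_le _ hlev, Function.comp_apply, clampTo_of_abs_le habs]

end PTree

open PTree

section Dirichlet

variable {V : Type} {T : PTree V} {v : V → ℝ} {p : ℝ}

lemma Dp_div_const (f : V → ℝ) {c : ℝ} (hc : 0 < c) :
    Dp T v p (fun k => f k / c) = Dp T v p f / ENNReal.ofReal (c ^ p) := by
  simp_rw [Dp, div_sub_div_same]
  exact tsum_ofReal_mul_abs_div_rpow _ _ p hc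

lemma Dp_comp_le (hp : 0 ≤ p) {φ : ℝ → ℝ} (hφ : LipschitzWith 1 φ) (f : V → ℝ) :
    Dp T v p (φ ∘ f) ≤ Dp T v p f := by
  refine ENNReal.tsum_le_tsum fun i => ofReal_mul_le_ofReal_mul _ (by positivity) ?_
  refine Real.rpow_le_rpow (abs_nonneg _) ?_ hp
  simpa [Real.dist_eq] using hφ.dist_le_mul (f i) (f (T.par i))

lemma Dp_trunc_le (hp : 0 < p) (n : ℕ) (h : V → ℝ) : Dp T v p (T.trunc n h) ≤ Dp T v p h := by
  refine ENNReal.tsum_le_tsum fun ⟨i, _⟩ => ?_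
  dsimp only
  by_cases hle : T.level i ≤ n
  · have hpar : T.level (T.par i) ≤ n := by rw [T.level_par_eq_sub_one]; omega
    rw [trunc_of_level_le h hle, trunc_of_level_le h hpar]
  · rw [trunc_eq_trunc_par h (by omega), sub_self, abs_zero, Real.zero_rpow hp.ne', mul_zero,
      ENNReal.ofReal_zero]
    exact zero_le

end Dirichlet

section Eigenvalues

variable {V : Type} {T : PTree V} {v μ : V → ℝ} {p : ℝ}

lemma lamPn_antitone : Antitone (lamPn T v μ p) := fun _ _ hab =>
  iInf_mono fun _ => iInf_mono fun _ => iInf_mono fun _ =>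
    iInf_mono' fun hf => ⟨fun i hi => hf i (by omega), le_rfl⟩

lemma lamP_le_lamPn (n : ℕ) : lamP T v μ p ≤ lamPn T v μ p n :=
  iInf_mono fun _ => iInf_mono fun _ => iInf_mono fun _ => le_iInf fun _ => le_rfl

/-- Normalising `g` to unit mass makes it a competitor for `λ_p^{(n)}`. -/
lemma lamPn_mul_lpMass_le (hp : p ≠ 0) {n : ℕ} {g : V → ℝ} (hg0 : g T.root = 0)
    (hgn : ∀ i, n + 1 ≤ T.level i → g i = g (T.par i)) (hS : lpMass μ p g ≠ ⊤) :
    lamPn T v μ p n * lpMass μ p g ≤ Dp T v p g := by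
  rcases eq_or_ne (lpMass μ p g) 0 with hS0 | hS0
  · simp [hS0]
  obtain ⟨c, hc, hcS⟩ := exists_pos_ofReal_rpow_eq hS0 hS hp
  have hnorm : lpMass μ p (fun k => g k / c) = 1 := by
    rw [lpMass_div_const μ p g hc, hcS, ENNReal.div_self hS0 hS]
  have hle : lamPn T v μ p n ≤ Dp T v p g / lpMass μ p g := by
    rw [← hcS, ← Dp_div_const g hc]
    exact iInf_le_of_le _ <| iInf_le_of_le (by simp [hg0]) <| iInf_le_of_le hnorm <|
      iInf_le_of_le (fun i hi => by rw [hgn i hi]) le_rfl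
  calc lamPn T v μ p n * lpMass μ p g ≤ Dp T v p g / lpMass μ p g * lpMass μ p g := by gcongr
    _ = Dp T v p g := ENNReal.div_mul_cancel hS0 hS

lemma iInf_lamPn_le_Dp (hp : 0 < p) (hmass : (∑' k : V, ENNReal.ofReal (μ k)) ≠ ⊤)
    {f : V → ℝ} (hf0 : f T.root = 0) (hf1 : lpMass μ p f = 1) :
    ⨅ n, lamPn T v μ p n ≤ Dp T v p f := by
  set fm : ℕ → V → ℝ := fun m => T.trunc m (clampTo m ∘ f)
  have hstep : ∀ m, (⨅ n, lamPn T v μ p n) * lpMass μ p (fm m) ≤ Dp T v p f := fun m =>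
    calc (⨅ n, lamPn T v μ p n) * lpMass μ p (fm m)
        ≤ lamPn T v μ p m * lpMass μ p (fm m) := by gcongr; exact iInf_le _ m
      _ ≤ Dp T v p (fm m) := by
        refine lamPn_mul_lpMass_le hp.ne' ?_ (fun i hi => trunc_eq_trunc_par _ hi)
          (lpMass_ne_top_of_abs_le hp.le hmass fun k => abs_clampTo_le m _)
        show T.trunc m (clampTo m ∘ f) T.root = 0
        rw [trunc_of_level_le _ (T.level_root.trans_le m.zero_le), Function.comp_apply, hf0,
          clampTo_of_abs_le (by simp)]
      _ ≤ Dp T v p (clampTo m ∘ f) := Dp_trunc_le hp m _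
      _ ≤ Dp T v p f := Dp_comp_le hp.le (lipschitzWith_clampTo m) f
  have hsup : 1 ≤ ⨆ m, lpMass μ p (fm m) := by
    rw [← hf1]
    exact tsum_le_iSup_tsum_of_eventually_eq _ _ fun k =>
      (trunc_clampTo_eventually_eq (T := T) f k).mono fun m hm => by simp only [fm, hm]
  calc ⨅ n, lamPn T v μ p n ≤ (⨅ n, lamPn T v μ p n) * ⨆ m, lpMass μ p (fm m) :=
        le_mul_of_one_le_right' hsup
    _ ≤ Dp T v p f := by rw [ENNReal.mul_iSup]; exact iSup_le hstep

end Eigenvalues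

theorem lamPn_antitone_tendsto_general {V : Type} (T : PTree V) (v μ : V → ℝ) (p : ℝ)
    (hp : 1 < p) (hmass : (∑' k : V, ENNReal.ofReal (μ k)) ≠ ⊤) :
    Antitone (fun n => lamPn T v μ p n) ∧ (⨅ n : ℕ, lamPn T v μ p n) = lamP T v μ p :=
  ⟨lamPn_antitone, le_antisymm
    (le_iInf fun _ => le_iInf fun hf0 => le_iInf fun hf1 =>
      iInf_lamPn_le_Dp (zero_lt_one.trans hp) hmass hf0 hf1)
    (le_iInf lamP_le_lamPn)⟩

/-- If the total `μ`-mass is finite then `λ_p^{(n)} ↓ λ_p`. -/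
theorem lamPn_antitone_tendsto {V : Type} (T : PTree V) (v μ : V → ℝ) (p : ℝ)
    (hp : 1 < p) (hv : ∀ i, 0 < v i) (hμ : ∀ i, 0 < μ i)
    (hmass : (∑' k : V, ENNReal.ofReal (μ k)) ≠ ⊤) :
    Antitone (fun n => lamPn T v μ p n) ∧ (⨅ n : ℕ, lamPn T v μ p n) = lamP T v μ p :=
  lamPn_antitone_tendsto_general T v μ p hp hmass
end

section
/- Let T be a locally finite rooted tree and suppose g solves the Poisson equation Ω_p g(i) = -μ_i |f_i|^{p-2} f_i for all i ∈ V \ {o}. Then for every k ∈ V \ {o} and every n ≥ |k|: Σ_{j ∈ Λ_{n+1} ∩ V_k} v_j |g_{j*} - g_j|^{p-2}(g_{j*} - g_j) + v_k |g_k - g_{k*}|^{p-2}(g_k - g_{k*}) = Σ_{j ∈ V_k ∩ V(n)} μ_j |f_j|^{p-2} f_j, where Λ_m is the set of vertices at level m, V_k the vertex set of the subtree rooted at k, and V(n) the set of vertices of level ≤ n. -/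
open scoped ENNReal Classical BigOperators

noncomputable def Omega {V : Type} (T : PTree V)
    (hfin : ∀ i : V, {j : V | T.par j = i ∧ j ≠ T.root}.Finite)
    (v : V → ℝ) (p : ℝ) (f : V → ℝ) (i : V) : ℝ :=
  (∑ j ∈ (hfin i).toFinset, v j * |f j - f i| ^ (p - 2) * (f j - f i))
    + v i * |f (T.par i) - f i| ^ (p - 2) * (f (T.par i) - f i)

/-!
Write `φ j = v_j |g_{j*} - g_j|^{p-2} (g_{j*} - g_j)` for the flux through the edge from `j` to its
parent. Then `Ω_p g(i) = φ_i - Σ_{j child of i} φ_j`, so the Poisson equation says that the flux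
into the children of `i` is the flux out of `i` plus the source `μ_i |f_i|^{p-2} f_i`. Summing over
the generations of descendants of `k` telescopes: the flux through generation `m` of the subtree
equals `φ_k` plus the sources of generations `0, …, m - 1`.
-/

theorem tsum_subtype_eq_sum_of_iff {α M : Type*} [AddCommMonoid M] [TopologicalSpace M]
    {P : α → Prop} (s : Finset α) (h : ∀ a, P a ↔ a ∈ s) (F : α → M) :
    ∑' a : {a // P a}, F a = ∑ a ∈ s, F a := by
  rw [← Finset.tsum_subtype s F]
  exact (Equiv.subtypeEquivRight h).tsum_eq (fun a => F a)

namespace PTree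

variable {V : Type} (T : PTree V)

theorem iterate_par_root (m : ℕ) : T.par^[m] T.root = T.root :=
  Function.iterate_fixed T.par_root m

theorem level_eq_level_iterate_par_add {m : ℕ} {j : V} (h : T.par^[m] j ≠ T.root) :
    T.level j = T.level (T.par^[m] j) + m := by
  induction m generalizing j with
  | zero => rfl
  | succ m ih =>
    rw [Function.iterate_succ_apply] at h ⊢
    have hj : j ≠ T.root := by
      rintro rfl
      rw [T.par_root, iterate_par_root] at h
      exact h rfl
    rw [T.level_par j hj, ih h]
    ring

theorem level_of_iterate_par_eq {k : V} (hk : k ≠ T.root) {m : ℕ} {j : V}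
    (h : T.par^[m] j = k) : T.level j = T.level k + m := by
  rw [T.level_eq_level_iterate_par_add (h ▸ hk), h]

section Generations

variable (hfin : ∀ i : V, {j : V | T.par j = i ∧ j ≠ T.root}.Finite)

noncomputable def children (i : V) : Finset V := (hfin i).toFinset

noncomputable def generation (k : V) : ℕ → Finset V
  | 0 => {k}
  | m + 1 => (generation k m).biUnion (T.children hfin)

variable {T hfin}

theorem mem_children {i j : V} : j ∈ T.children hfin i ↔ T.par j = i ∧ j ≠ T.root :=
  Set.Finite.mem_toFinset _

theorem pairwiseDisjoint_children (s : Set V) : s.PairwiseDisjoint (T.children hfin) :=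
  fun _ _ _ _ hne => Finset.disjoint_left.2 fun _ hj hj' =>
    hne ((mem_children.1 hj).1.symm.trans (mem_children.1 hj').1)

theorem mem_generation {k : V} (hk : k ≠ T.root) {m : ℕ} {j : V} :
    j ∈ T.generation hfin k m ↔ T.par^[m] j = k := by
  induction m generalizing j with
  | zero => exact Finset.mem_singleton
  | succ m ih =>
    simp only [generation, Finset.mem_biUnion, mem_children, ih, Function.iterate_succ_apply]
    constructor
    · rintro ⟨_, hi, rfl, -⟩
      exact hi
    · intro h
      refine ⟨_, h, rfl, ?_⟩
      rintro rfl
      rw [T.par_root, iterate_par_root] at h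
      exact hk h.symm

theorem ne_root_of_mem_generation {k : V} (hk : k ≠ T.root) {m : ℕ} {j : V}
    (hj : j ∈ T.generation hfin k m) : j ≠ T.root := by
  rintro rfl
  rw [mem_generation hk, iterate_par_root] at hj
  exact hk hj.symm

theorem pairwiseDisjoint_generation {k : V} (hk : k ≠ T.root) (s : Set ℕ) :
    s.PairwiseDisjoint (T.generation hfin k) :=
  fun _ _ _ _ hne => Finset.disjoint_left.2 fun _ hj hj' => hne <| by
    have := (T.level_of_iterate_par_eq hk ((mem_generation hk).1 hj)).symm.trans
      (T.level_of_iterate_par_eq hk ((mem_generation hk).1 hj'))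
    omega

theorem level_eq_and_anc_iff {k : V} (hk : k ≠ T.root) {n : ℕ} (hn : T.level k ≤ n) {j : V} :
    T.level j = n ∧ T.anc k j ↔ j ∈ T.generation hfin k (n - T.level k) := by
  rw [mem_generation hk]
  constructor
  · rintro ⟨rfl, m, hm⟩
    rwa [T.level_of_iterate_par_eq hk hm, Nat.add_sub_cancel_left]
  · intro h
    have := T.level_of_iterate_par_eq hk h
    exact ⟨by omega, _, h⟩

theorem anc_and_level_le_iff {k : V} (hk : k ≠ T.root) {n : ℕ} {j : V} :
    T.anc k j ∧ T.level j ≤ n ↔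
      j ∈ (Finset.range (n + 1 - T.level k)).biUnion (T.generation hfin k) := by
  simp only [Finset.mem_biUnion, Finset.mem_range, mem_generation hk]
  constructor
  · rintro ⟨⟨m, hm⟩, hle⟩
    have := T.level_of_iterate_par_eq hk hm
    exact ⟨m, by omega, hm⟩
  · rintro ⟨m, hlt, hm⟩
    have := T.level_of_iterate_par_eq hk hm
    exact ⟨⟨m, hm⟩, by omega⟩

theorem sum_generation_succ (k : V) (m : ℕ) (φ : V → ℝ) :
    ∑ j ∈ T.generation hfin k (m + 1), φ j =
      ∑ i ∈ T.generation hfin k m, ∑ j ∈ T.children hfin i, φ j :=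
  Finset.sum_biUnion (pairwiseDisjoint_children _)

theorem sum_generation_eq_add_sum_range {k : V} (hk : k ≠ T.root) {φ ψ : V → ℝ}
    (hφ : ∀ i, i ≠ T.root → ∑ j ∈ T.children hfin i, φ j = φ i + ψ i) (m : ℕ) :
    ∑ j ∈ T.generation hfin k m, φ j =
      φ k + ∑ r ∈ Finset.range m, ∑ j ∈ T.generation hfin k r, ψ j := by
  have hstep : ∀ r, ∑ j ∈ T.generation hfin k (r + 1), φ j -
      ∑ j ∈ T.generation hfin k r, φ j = ∑ j ∈ T.generation hfin k r, ψ j := fun r => by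
    rw [sum_generation_succ, ← Finset.sum_sub_distrib]
    refine Finset.sum_congr rfl fun i hi => ?_
    rw [hφ i (ne_root_of_mem_generation hk hi)]
    ring
  simp only [← hstep, Finset.sum_range_sub (fun r => ∑ j ∈ T.generation hfin k r, φ j)]
  simp [generation]

end Generations

noncomputable def edgeFlux (v : V → ℝ) (p : ℝ) (g : V → ℝ) (j : V) : ℝ :=
  v j * |g (T.par j) - g j| ^ (p - 2) * (g (T.par j) - g j)

theorem omega_eq_edgeFlux_sub_sum_children
    (hfin : ∀ i : V, {j : V | T.par j = i ∧ j ≠ T.root}.Finite)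
    (v : V → ℝ) (p : ℝ) (g : V → ℝ) (i : V) :
    Omega T hfin v p g i =
      T.edgeFlux v p g i - ∑ j ∈ T.children hfin i, T.edgeFlux v p g j := by
  have hchild : ∀ j ∈ T.children hfin i,
      v j * |g j - g i| ^ (p - 2) * (g j - g i) = -T.edgeFlux v p g j := fun j hj => by
    rw [edgeFlux, (mem_children.1 hj).1, abs_sub_comm]
    ring
  rw [Omega, ← children, Finset.sum_congr rfl hchild, Finset.sum_neg_distrib, edgeFlux]
  ring

end PTree

theorem poisson_telescoping_general {V : Type} (T : PTree V)
    (hfin : ∀ i : V, {j : V | T.par j = i ∧ j ≠ T.root}.Finite)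
    (v μ : V → ℝ) (p : ℝ)
    (f g : V → ℝ)
    (hpoisson : ∀ i, i ≠ T.root →
      Omega T hfin v p g i = -(μ i) * (|f i| ^ (p - 2) * f i)) :
    ∀ k, k ≠ T.root → ∀ n : ℕ, T.level k ≤ n →
      (∑' j : {j : V // T.level j = n + 1 ∧ T.anc k j},
          v j.1 * |g (T.par j.1) - g j.1| ^ (p - 2) * (g (T.par j.1) - g j.1))
        + v k * |g k - g (T.par k)| ^ (p - 2) * (g k - g (T.par k))
      = ∑' j : {j : V // T.anc k j ∧ T.level j ≤ n},
          μ j.1 * (|f j.1| ^ (p - 2) * f j.1) := by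
  intro k hk n hn
  have hflux : ∀ i, i ≠ T.root → ∑ j ∈ T.children hfin i, T.edgeFlux v p g j =
      T.edgeFlux v p g i + μ i * (|f i| ^ (p - 2) * f i) := fun i hi => by
    linarith [hpoisson i hi, T.omega_eq_edgeFlux_sub_sum_children hfin v p g i]
  have hk_flux : v k * |g k - g (T.par k)| ^ (p - 2) * (g k - g (T.par k)) =
      -T.edgeFlux v p g k := by
    rw [PTree.edgeFlux, abs_sub_comm]
    ring
  show ∑' j : {j // T.level j = n + 1 ∧ T.anc k j}, T.edgeFlux v p g j + _ = _
  have hlevel : T.level k ≤ n + 1 := by omega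
  rw [tsum_subtype_eq_sum_of_iff _ (fun _ => PTree.level_eq_and_anc_iff (hfin := hfin) hk hlevel),
    tsum_subtype_eq_sum_of_iff _ (fun _ => PTree.anc_and_level_le_iff (hfin := hfin) hk)
      fun i => μ i * (|f i| ^ (p - 2) * f i),
    Finset.sum_biUnion (PTree.pairwiseDisjoint_generation hk _),
    PTree.sum_generation_eq_add_sum_range hk hflux, hk_flux]
  ring

/-- Telescoping identity obtained by summing the Poisson equation
`Ω_p g(i) = -μ_i |f_i|^{p-2} f_i` over `V_k ∩ V(n)`. -/
theorem poisson_telescoping {V : Type} (T : PTree V)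
    (hfin : ∀ i : V, {j : V | T.par j = i ∧ j ≠ T.root}.Finite)
    (v μ : V → ℝ) (p : ℝ) (hp : 1 < p) (hv : ∀ i, 0 < v i) (hμ : ∀ i, 0 < μ i)
    (f g : V → ℝ)
    (hpoisson : ∀ i, i ≠ T.root →
      Omega T hfin v p g i = -(μ i) * (|f i| ^ (p - 2) * f i)) :
    ∀ k, k ≠ T.root → ∀ n : ℕ, T.level k ≤ n →
      (∑' j : {j : V // T.level j = n + 1 ∧ T.anc k j},
          v j.1 * |g (T.par j.1) - g j.1| ^ (p - 2) * (g (T.par j.1) - g j.1))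
        + v k * |g k - g (T.par k)| ^ (p - 2) * (g k - g (T.par k))
      = ∑' j : {j : V // T.anc k j ∧ T.level j ≤ n},
          μ j.1 * (|f j.1| ^ (p - 2) * f j.1) :=
  poisson_telescoping_general T hfin v μ p f g hpoisson
end

section
/- Let T be a locally finite rooted tree with Σ_k μ_k < ∞, p > 1, and λ_p = inf{D_p(f) : μ(|f|^p) = 1, f_o = 0}. For any f with f_o = 0 such that f_i > f_{i*} along 𝒫(k) for some vertex k and f_i = f_{i*} for |i| ≥ |k| (i.e. f ∈ 𝔉̃_I), one has λ_p ≤ sup_{i ∈ V\{o}} I_i(f)^{-1}, where I_i(f) = (v_i (f_i - f_{i*})^{p-1})^{-1} Σ_{j ∈ V_i} μ_j f_j^{p-1}. -/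
open scoped ENNReal Classical BigOperators

/-- The single-summation operator
`I_i(f) = (v_i (f_i - f_{i*})^{p-1})⁻¹ Σ_{j ∈ V_i} μ_j f_j^{p-1}` (in `ℝ≥0∞`). -/
noncomputable def Iop {V : Type} (T : PTree V) (v μ : V → ℝ) (p : ℝ)
    (f : V → ℝ) (i : V) : ℝ≥0∞ :=
  (∑' j : {j : V // T.anc i j}, ENNReal.ofReal (μ j.1 * f j.1 ^ (p - 1)))
    / ENNReal.ofReal (v i * (f i - f (T.par i)) ^ (p - 1))


/-!
Write `M` for the supremum and `q = p - 1`. Replace `f` by its running maximum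
`g_j = max_{i ≤ j} max (f_i, κ |f_i|)` along the path from `o` to `j`, where `κ ^ q = (cos qπ)⁺`
accounts for real powers of negative numbers (`x ^ q = |x| ^ q cos qπ` for `x < 0`).
Then `g ≥ 0` is nondecreasing away from the root, `f ^ q ≤ g ^ q`, and every positive increment of
`g` is dominated in `q`-th power by the increment of `f` at the same vertex, so
`v_i (g_i - g_{i*}) ^ q ≤ M Σ_{j ∈ V_i} μ_j g_j ^ q` wherever `g` increases.
Multiplying by `g_i - g_{i*}` and summing by parts along the tree,
`Σ_i (g_i - g_{i*}) Σ_{j ∈ V_i} h_j = Σ_j g_j h_j`, gives `D_p(g) ≤ M μ(g ^ p)`, hence `λ_p ≤ M`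
as soon as `0 < μ(g ^ p) < ∞`.

If `μ(g ^ p) = ∞`, take a deepest vertex `x` whose subtree has infinite `μ(g ^ p)`-mass (one exists
because `g` is constant below the level of `k`). Its children have finite masses of infinite sum.
Keeping the increments of `g` only on the path to `x` and on the subtrees of finitely many children
gives test functions of arbitrarily large mass whose energy exceeds `M` times the mass by at most
the fixed contribution of the path, so again `λ_p ≤ M`.
-/

open Real Filter Topology

namespace PTree

variable {V : Type} (T : PTree V)

theorem eq_root_of_level_eq_zero {j : V} (h : T.level j = 0) : j = T.root := by
  simpa [h] using T.par_iter_root j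

theorem level_par_lt {j : V} (hj : j ≠ T.root) : T.level (T.par j) < T.level j := by
  have := T.level_par j hj
  omega

theorem level_par_le (j : V) : T.level (T.par j) ≤ T.level j := by
  by_cases hj : j = T.root
  · rw [hj, T.par_root]
  · exact (T.level_par_lt hj).le

@[elab_as_elim]
theorem induction_on {P : V → Prop} (j : V) (root : P T.root)
    (par : ∀ j, j ≠ T.root → P (T.par j) → P j) : P j := by
  induction h : T.level j generalizing j with
  | zero => rwa [T.eq_root_of_level_eq_zero h]
  | succ n ih =>
    have hj : j ≠ T.root := by
      rintro rfl
      simp [T.level_root] at h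
    exact par j hj (ih _ (by have := T.level_par j hj; omega))

theorem anc_refl (j : V) : T.anc j j := ⟨0, rfl⟩

theorem anc_par_self (j : V) : T.anc (T.par j) j := ⟨1, rfl⟩

theorem anc_root (j : V) : T.anc T.root j := ⟨_, T.par_iter_root j⟩

theorem anc_trans {a b c : V} (hab : T.anc a b) (hbc : T.anc b c) : T.anc a c := by
  obtain ⟨m, rfl⟩ := hab
  obtain ⟨n, rfl⟩ := hbc
  exact ⟨m + n, Function.iterate_add_apply _ _ _ _⟩

theorem anc_par_of_anc {i j : V} (h : T.anc i j) (hji : j ≠ i) : T.anc i (T.par j) := by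
  obtain ⟨_ | m, hm⟩ := h
  · exact absurd hm hji
  · exact ⟨m, hm⟩

theorem level_le_of_anc {i j : V} (h : T.anc i j) : T.level i ≤ T.level j := by
  obtain ⟨m, rfl⟩ := h
  induction m generalizing j with
  | zero => exact le_rfl
  | succ m ih => exact (ih (j := T.par j)).trans (T.level_par_le j)

theorem not_anc_par {i : V} (hi : i ≠ T.root) : ¬ T.anc i (T.par i) :=
  fun h => (T.level_le_of_anc h).not_gt (T.level_par_lt hi)

theorem anc_total {a b j : V} (ha : T.anc a j) (hb : T.anc b j) : T.anc a b ∨ T.anc b a := by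
  obtain ⟨m, rfl⟩ := ha
  obtain ⟨n, rfl⟩ := hb
  rcases le_total m n with h | h
  · refine Or.inr ⟨n - m, ?_⟩
    rw [← Function.iterate_add_apply, Nat.sub_add_cancel h]
  · refine Or.inl ⟨m - n, ?_⟩
    rw [← Function.iterate_add_apply, Nat.sub_add_cancel h]

theorem exists_child_anc {x j : V} (h : T.anc x j) (hjx : j ≠ x) :
    ∃ c, T.par c = x ∧ c ≠ x ∧ T.anc c j := by
  obtain ⟨m, hm⟩ := h
  induction m generalizing j with
  | zero => exact absurd hm hjx
  | succ m ih =>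
    by_cases hpar : T.par j = x
    · exact ⟨j, hpar, hjx, T.anc_refl j⟩
    · obtain ⟨c, hc, hcx, hcj⟩ := ih hpar hm
      exact ⟨c, hc, hcx, T.anc_trans hcj (T.anc_par_self j)⟩

theorem eq_of_anc_of_anc_of_par_eq {x c c' j : V} (hc : T.par c = x) (hcx : c ≠ x)
    (hc' : T.par c' = x) (hc'x : c' ≠ x) (h : T.anc c j) (h' : T.anc c' j) : c = c' := by
  have key : ∀ {a b : V}, T.par a = x → a ≠ x → T.par b = x → T.anc a b → a = b := by
    intro a b ha hax hb hab
    by_contra hne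
    have har : a ≠ T.root := fun hr => hax (by rw [← ha, hr, T.par_root])
    have := T.anc_par_of_anc hab (Ne.symm hne)
    rw [hb, ← ha] at this
    exact T.not_anc_par har this
  rcases T.anc_total h h' with hcc' | hc'c
  · exact key hc hcx hc' hcc'
  · exact (key hc' hc'x hc hc'c).symm

theorem eq_of_anc_of_le_level {α : Type*} {u : V → α} {K : ℕ}
    (hu : ∀ i, K < T.level i → u i = u (T.par i)) {x j : V} (hx : K ≤ T.level x)
    (h : T.anc x j) : u j = u x := by
  obtain ⟨m, hm⟩ := h
  induction m generalizing j with
  | zero => exact congrArg u hm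
  | succ m ih =>
    have hpar : u (T.par j) = u x := ih hm
    by_cases hj : j = T.root
    · rw [hj]
      rwa [hj, T.par_root] at hpar
    · rw [hu j ((hx.trans (T.level_le_of_anc ⟨m, hm⟩)).trans_lt (T.level_par_lt hj)), hpar]

noncomputable def ancFinset (j : V) : Finset V :=
  (Finset.range (T.level j + 1)).image (T.par^[·] j)

theorem mem_ancFinset {i j : V} : i ∈ T.ancFinset j ↔ T.anc i j := by
  simp only [ancFinset, Finset.mem_image, Finset.mem_range, Nat.lt_succ_iff]
  constructor
  · rintro ⟨m, -, hm⟩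
    exact ⟨m, hm⟩
  · rintro ⟨m, rfl⟩
    rcases le_or_gt m (T.level j) with hm | hm
    · exact ⟨m, hm, rfl⟩
    · refine ⟨T.level j, le_rfl, ?_⟩
      rw [T.par_iter_root, ← Nat.sub_add_cancel hm.le, Function.iterate_add_apply,
        T.par_iter_root, Function.iterate_fixed T.par_root]

theorem ancFinset_root : T.ancFinset T.root = {T.root} := by
  ext i
  rw [mem_ancFinset, Finset.mem_singleton]
  constructor
  · rintro ⟨m, hm⟩
    rw [← hm, Function.iterate_fixed T.par_root]
  · rintro rfl
    exact T.anc_refl _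

theorem ancFinset_of_ne_root {j : V} (hj : j ≠ T.root) :
    T.ancFinset j = insert j (T.ancFinset (T.par j)) := by
  ext i
  rw [Finset.mem_insert, mem_ancFinset, mem_ancFinset]
  constructor
  · intro h
    by_cases hji : j = i
    · exact Or.inl hji.symm
    · exact Or.inr (T.anc_par_of_anc h hji)
  · rintro (rfl | h)
    · exact T.anc_refl i
    · exact T.anc_trans h (T.anc_par_self j)

theorem not_mem_ancFinset_par {j : V} (hj : j ≠ T.root) : j ∉ T.ancFinset (T.par j) :=
  fun h => T.not_anc_par hj (T.mem_ancFinset.1 h)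

theorem sum_ancFinset_sub_par (u : V → ℝ) (j : V) :
    ∑ i ∈ T.ancFinset j, (u i - u (T.par i)) = u j - u T.root := by
  induction j using T.induction_on with
  | root => simp [ancFinset_root, T.par_root]
  | par j hj ih =>
    rw [T.ancFinset_of_ne_root hj, Finset.sum_insert (T.not_mem_ancFinset_par hj), ih]
    ring

theorem root_le_of_forall_par_le {u : V → ℝ} (hu : ∀ i, u (T.par i) ≤ u i) (j : V) :
    u T.root ≤ u j := by
  have := Finset.sum_nonneg fun i (_ : i ∈ T.ancFinset j) => sub_nonneg.2 (hu i)
  rw [sum_ancFinset_sub_par] at this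
  linarith

end PTree

namespace PTree

variable {V : Type} (T : PTree V)

theorem ancFinset_nonempty (j : V) : (T.ancFinset j).Nonempty :=
  ⟨j, T.mem_ancFinset.2 (T.anc_refl j)⟩

noncomputable def pathMax (h : V → ℝ) (j : V) : ℝ :=
  (T.ancFinset j).sup' (T.ancFinset_nonempty j) h

theorem le_pathMax (h : V → ℝ) {i j : V} (hij : T.anc i j) : h i ≤ T.pathMax h j :=
  Finset.le_sup' h (T.mem_ancFinset.2 hij)

theorem pathMax_root (h : V → ℝ) : T.pathMax h T.root = h T.root := by
  rw [pathMax, Finset.sup'_congr _ T.ancFinset_root (fun _ _ => rfl), Finset.sup'_singleton]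

theorem pathMax_of_ne_root (h : V → ℝ) {j : V} (hj : j ≠ T.root) :
    T.pathMax h j = max (h j) (T.pathMax h (T.par j)) := by
  rw [pathMax, Finset.sup'_congr _ (T.ancFinset_of_ne_root hj) (fun _ _ => rfl),
    Finset.sup'_insert]
  rfl

theorem pathMax_par_le (h : V → ℝ) (j : V) : T.pathMax h (T.par j) ≤ T.pathMax h j := by
  by_cases hj : j = T.root
  · rw [hj, T.par_root]
  · rw [T.pathMax_of_ne_root h hj]
    exact le_max_right _ _

theorem pathMax_eq_of_par_lt (h : V → ℝ) {j : V} (hj : T.pathMax h (T.par j) < T.pathMax h j) :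
    T.pathMax h j = h j := by
  have hjr : j ≠ T.root := by
    rintro rfl
    rw [T.par_root] at hj
    exact lt_irrefl _ hj
  rw [T.pathMax_of_ne_root h hjr] at hj ⊢
  exact max_eq_left (not_lt.1 fun hlt => (max_eq_right hlt.le ▸ hj).false)

theorem pathMax_eq_par_of_eq_par (h : V → ℝ) {j : V} (hj : h j = h (T.par j)) :
    T.pathMax h j = T.pathMax h (T.par j) := by
  by_cases hjr : j = T.root
  · rw [hjr, T.par_root]
  · rw [T.pathMax_of_ne_root h hjr, hj]
    exact max_eq_right (T.le_pathMax h (T.anc_refl _))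

noncomputable def restrictIncr (u : V → ℝ) (A : Set V) (j : V) : ℝ :=
  ∑ i ∈ (T.ancFinset j).filter (· ∈ A), (u i - u (T.par i))

theorem restrictIncr_sub_par (u : V → ℝ) (A : Set V) (i : V) :
    T.restrictIncr u A i - T.restrictIncr u A (T.par i) =
      if i ∈ A then u i - u (T.par i) else 0 := by
  by_cases hi : i = T.root
  · simp [hi, T.par_root]
  · rw [restrictIncr, restrictIncr, T.ancFinset_of_ne_root hi, Finset.filter_insert]
    split_ifs
    · rw [Finset.sum_insert fun h => T.not_mem_ancFinset_par hi (Finset.mem_of_mem_filter _ h)]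
      ring
    · ring

theorem restrictIncr_par_le {u : V → ℝ} (hu : ∀ i, u (T.par i) ≤ u i) (A : Set V) (i : V) :
    T.restrictIncr u A (T.par i) ≤ T.restrictIncr u A i := by
  rw [← sub_nonneg, restrictIncr_sub_par]
  split_ifs
  exacts [sub_nonneg.2 (hu i), le_rfl]

theorem restrictIncr_root (u : V → ℝ) (A : Set V) : T.restrictIncr u A T.root = 0 := by
  rw [restrictIncr, ancFinset_root, Finset.filter_singleton]
  split_ifs <;> simp [T.par_root]

theorem restrictIncr_eq {u : V → ℝ} {A : Set V} {j : V} (hA : ∀ i, T.anc i j → i ∈ A) :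
    T.restrictIncr u A j = u j - u T.root := by
  rw [restrictIncr, Finset.filter_true_of_mem fun i hi => hA i (T.mem_ancFinset.1 hi),
    sum_ancFinset_sub_par]

theorem restrictIncr_le {u : V → ℝ} (hu : ∀ i, u (T.par i) ≤ u i) {A : Set V} {j x : V}
    (hA : ∀ i ∈ A, T.anc i j → T.anc i x) : T.restrictIncr u A j ≤ u x - u T.root := by
  rw [restrictIncr, ← sum_ancFinset_sub_par]
  refine Finset.sum_le_sum_of_subset_of_nonneg (fun i hi => ?_) fun i _ _ => sub_nonneg.2 (hu i)
  rw [Finset.mem_filter, mem_ancFinset] at hi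
  exact T.mem_ancFinset.2 (hA i hi.2 hi.1)

theorem restrictIncr_eq_of_anc {u : V → ℝ} {A : Set V} {c j : V}
    (hpar : ∀ a, T.anc a (T.par c) → a ∈ A) (hsub : ∀ a, T.anc c a → a ∈ A)
    (hcj : T.anc c j) : T.restrictIncr u A j = u j - u T.root := by
  refine T.restrictIncr_eq fun a haj => ?_
  rcases T.anc_total haj hcj with hac | hca
  · by_cases hac' : a = c
    · exact hsub a (hac' ▸ T.anc_refl a)
    · exact hpar a (T.anc_par_of_anc hac (Ne.symm hac'))
  · exact hsub a hca

noncomputable def subtreeSum (F : V → ℝ≥0∞) (i : V) : ℝ≥0∞ := ∑' j : {j : V // T.anc i j}, F j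

theorem subtreeSum_eq_tsum_ite (F : V → ℝ≥0∞) (i : V) :
    T.subtreeSum F i = ∑' j, if T.anc i j then F j else 0 :=
  (tsum_subtype {j | T.anc i j} F).trans (tsum_congr fun _ => Set.indicator_apply _ _ _)

theorem subtreeSum_congr {F G : V → ℝ≥0∞} {i : V} (h : ∀ j, T.anc i j → F j = G j) :
    T.subtreeSum F i = T.subtreeSum G i :=
  tsum_congr fun j => h j j.2

theorem subtreeSum_root (F : V → ℝ≥0∞) : T.subtreeSum F T.root = ∑' j, F j := by
  simp only [subtreeSum_eq_tsum_ite, if_pos (T.anc_root _)]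

theorem subtreeSum_ne_top_of_le_mul {μ : V → ℝ} (hmass : ∑' j, ENNReal.ofReal (μ j) ≠ ⊤)
    {F : V → ℝ≥0∞} {x : V} {C : ℝ≥0∞} (hC : C ≠ ⊤)
    (hF : ∀ j, T.anc x j → F j ≤ C * ENNReal.ofReal (μ j)) : T.subtreeSum F x ≠ ⊤ := by
  refine ne_top_of_le_ne_top (ENNReal.mul_ne_top hC hmass) ?_
  calc T.subtreeSum F x ≤ ∑' j : {j : V // T.anc x j}, C * ENNReal.ofReal (μ j) :=
        ENNReal.tsum_le_tsum fun j => hF j j.2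
    _ ≤ ∑' j, C * ENNReal.ofReal (μ j) :=
        ENNReal.tsum_comp_le_tsum_of_injective Subtype.val_injective _
    _ = C * ∑' j, ENNReal.ofReal (μ j) := ENNReal.tsum_mul_left

theorem tsum_ofReal_sub_par_mul_subtreeSum {u : V → ℝ} (hu : ∀ i, u (T.par i) ≤ u i)
    (F : V → ℝ≥0∞) :
    ∑' i, ENNReal.ofReal (u i - u (T.par i)) * T.subtreeSum F i =
      ∑' j, ENNReal.ofReal (u j - u T.root) * F j := by
  have inner : ∀ j, ∑' i, (if T.anc i j then ENNReal.ofReal (u i - u (T.par i)) * F j else 0) =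
      ENNReal.ofReal (u j - u T.root) * F j := by
    intro j
    rw [tsum_eq_sum (s := T.ancFinset j) fun i hi => if_neg (mt T.mem_ancFinset.2 hi),
      Finset.sum_congr rfl fun i hi => if_pos (T.mem_ancFinset.1 hi), ← Finset.sum_mul,
      ← ENNReal.ofReal_sum_of_nonneg fun i _ => sub_nonneg.2 (hu i), sum_ancFinset_sub_par]
  simp_rw [subtreeSum_eq_tsum_ite, ← ENNReal.tsum_mul_left, mul_ite, mul_zero]
  rw [ENNReal.tsum_comm]
  exact tsum_congr inner

theorem subtreeSum_le_add_tsum_children (F : V → ℝ≥0∞) (x : V) :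
    T.subtreeSum F x ≤ F x + ∑' c : {c : V // T.par c = x ∧ c ≠ x}, T.subtreeSum F c := by
  have hpt : ∀ j, (if T.anc x j then F j else 0) ≤ (if j = x then F j else 0) +
      ∑' c : {c : V // T.par c = x ∧ c ≠ x}, if T.anc c j then F j else 0 := by
    intro j
    by_cases hxj : T.anc x j
    · rw [if_pos hxj]
      by_cases hjx : j = x
      · rw [if_pos hjx]
        exact le_self_add
      · obtain ⟨c, hc, hcx, hcj⟩ := T.exists_child_anc hxj hjx
        refine le_add_left (le_trans ?_ (ENNReal.le_tsum
          (f := fun c : {c : V // T.par c = x ∧ c ≠ x} => if T.anc c j then F j else 0)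
          ⟨c, hc, hcx⟩))
        show F j ≤ if T.anc c j then F j else 0
        rw [if_pos hcj]
    · rw [if_neg hxj]
      exact zero_le
  calc T.subtreeSum F x = ∑' j, if T.anc x j then F j else 0 := T.subtreeSum_eq_tsum_ite F x
    _ ≤ ∑' j, ((if j = x then F j else 0) +
          ∑' c : {c : V // T.par c = x ∧ c ≠ x}, if T.anc c j then F j else 0) :=
        ENNReal.tsum_le_tsum hpt
    _ = F x + ∑' c : {c : V // T.par c = x ∧ c ≠ x}, T.subtreeSum F c := by
        rw [ENNReal.tsum_add, tsum_ite_eq, ENNReal.tsum_comm]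
        simp only [subtreeSum_eq_tsum_ite]

theorem exists_subtreeSum_eq_top_forall_child_ne_top {F : V → ℝ≥0∞} {K : ℕ}
    (hK : ∀ x, K ≤ T.level x → T.subtreeSum F x ≠ ⊤) (htop : T.subtreeSum F T.root = ⊤) :
    ∃ x, T.subtreeSum F x = ⊤ ∧ ∀ c, T.par c = x → c ≠ x → T.subtreeSum F c ≠ ⊤ := by
  obtain ⟨x, hxn, hx⟩ := Nat.findGreatest_spec
    (P := fun n => ∃ x, T.level x = n ∧ T.subtreeSum F x = ⊤) (Nat.zero_le K)
    ⟨T.root, T.level_root, htop⟩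
  refine ⟨x, hx, fun c hc hcx hctop => ?_⟩
  have hcr : c ≠ T.root := fun hr => hcx (by rw [← hc, hr, T.par_root])
  have hlev : T.level c = T.level x + 1 := by rw [T.level_par c hcr, hc]
  have hcK : T.level c ≤ K := by
    by_contra! h
    exact hK c h.le hctop
  have := Nat.le_findGreatest (P := fun n => ∃ x, T.level x = n ∧ T.subtreeSum F x = ⊤)
    hcK ⟨c, rfl, hctop⟩
  omega

theorem sum_subtreeSum_le_tsum {ι : Type*} (s : Finset ι) (c : ι → V)
    (hdisj : ∀ a ∈ s, ∀ b ∈ s, ∀ j, T.anc (c a) j → T.anc (c b) j → a = b)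
    {F G : V → ℝ≥0∞} (hFG : ∀ a ∈ s, ∀ j, T.anc (c a) j → F j ≤ G j) :
    ∑ a ∈ s, T.subtreeSum F (c a) ≤ ∑' j, G j := by
  simp_rw [subtreeSum_eq_tsum_ite]
  rw [← Summable.tsum_finsetSum fun _ _ => ENNReal.summable]
  refine ENNReal.tsum_le_tsum fun j => ?_
  by_cases h : ∃ a ∈ s, T.anc (c a) j
  · obtain ⟨a, ha, haj⟩ := h
    rw [Finset.sum_eq_single_of_mem a ha
      fun b hb hba => if_neg fun hbj => hba (hdisj b hb a ha j hbj haj), if_pos haj]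
    exact hFG a ha j haj
  · push Not at h
    rw [Finset.sum_eq_zero fun a ha => if_neg (h a ha)]
    exact zero_le

theorem tsum_le_tsum_add_sum_subtreeSum {ι : Type*} (s : Finset ι) (c : ι → V)
    {F G H : V → ℝ≥0∞} (hin : ∀ a ∈ s, ∀ j, T.anc (c a) j → G j ≤ F j)
    (hout : ∀ j, (∀ a ∈ s, ¬ T.anc (c a) j) → G j ≤ H j) :
    ∑' j, G j ≤ ∑' j, H j + ∑ a ∈ s, T.subtreeSum F (c a) := by
  simp_rw [subtreeSum_eq_tsum_ite]
  rw [← Summable.tsum_finsetSum fun _ _ => ENNReal.summable, ← ENNReal.tsum_add]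
  refine ENNReal.tsum_le_tsum fun j => ?_
  by_cases h : ∃ a ∈ s, T.anc (c a) j
  · obtain ⟨a, ha, haj⟩ := h
    refine le_add_left ((hin a ha j haj).trans ?_)
    exact (le_of_eq (if_pos haj).symm).trans
      (Finset.single_le_sum (f := fun a => if T.anc (c a) j then F j else 0)
        (fun _ _ => zero_le) ha)
  · push Not at h
    exact le_add_right (hout j h)

end PTree

section RpowMajorant

variable {q : ℝ}

theorem rpow_of_neg {x : ℝ} (hx : x < 0) (q : ℝ) : x ^ q = |x| ^ q * cos (q * π) := by
  rw [rpow_def_of_neg hx, rpow_def_of_pos (abs_pos.2 hx.ne), log_abs]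

/-- `κ_q` with `κ_q ^ q = max (cos (q π)) 0`, so that by `rpow_of_neg`,
`x ^ q ≤ (κ_q |x|) ^ q` for `x < 0`. -/
noncomputable def negRpowConst (q : ℝ) : ℝ := max (cos (q * π)) 0 ^ q⁻¹

/-- For `q > 0`, the least `y ≥ 0` with `x ^ q ≤ y ^ q`. -/
noncomputable def rpowMajorant (q x : ℝ) : ℝ := max x (negRpowConst q * |x|)

theorem negRpowConst_nonneg : 0 ≤ negRpowConst q := rpow_nonneg (le_max_right _ _) _

theorem negRpowConst_le_one (hq : 0 < q) : negRpowConst q ≤ 1 :=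
  rpow_le_one (le_max_right _ _) (max_le (cos_le_one _) zero_le_one) (inv_nonneg.2 hq.le)

theorem negRpowConst_rpow (hq : q ≠ 0) : negRpowConst q ^ q = max (cos (q * π)) 0 := by
  rw [negRpowConst, ← rpow_mul (le_max_right _ _), inv_mul_cancel₀ hq, rpow_one]

theorem rpowMajorant_nonneg (q x : ℝ) : 0 ≤ rpowMajorant q x :=
  (mul_nonneg negRpowConst_nonneg (abs_nonneg x)).trans (le_max_right _ _)

theorem rpow_le_rpow_of_rpowMajorant_le (hq : 0 < q) {x y : ℝ} (h : rpowMajorant q x ≤ y) :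
    x ^ q ≤ y ^ q := by
  rcases le_or_gt 0 x with hx | hx
  · exact rpow_le_rpow hx ((le_max_left _ _).trans h) hq.le
  calc x ^ q = |x| ^ q * cos (q * π) := rpow_of_neg hx q
    _ ≤ |x| ^ q * max (cos (q * π)) 0 :=
        mul_le_mul_of_nonneg_left (le_max_left _ _) (rpow_nonneg (abs_nonneg x) _)
    _ = (negRpowConst q * |x|) ^ q := by
        rw [mul_rpow negRpowConst_nonneg (abs_nonneg x), negRpowConst_rpow hq.ne', mul_comm]
    _ ≤ y ^ q := rpow_le_rpow (mul_nonneg negRpowConst_nonneg (abs_nonneg x))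
        ((le_max_right _ _).trans h) hq.le

theorem rpowMajorant_sub_rpow_le (hq : 0 < q) {a b : ℝ} (h : rpowMajorant q b < rpowMajorant q a) :
    (rpowMajorant q a - rpowMajorant q b) ^ q ≤ (a - b) ^ q := by
  have hκ0 : 0 ≤ negRpowConst q := negRpowConst_nonneg
  have hb : b ≤ rpowMajorant q b := le_max_left _ _
  have hκb : negRpowConst q * |b| ≤ rpowMajorant q b := le_max_right _ _
  rcases le_or_gt 0 a with ha | ha
  · have hφa : rpowMajorant q a = a := by
      refine max_eq_left ?_
      rw [abs_of_nonneg ha]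
      nlinarith [negRpowConst_le_one hq]
    rw [hφa] at h ⊢
    exact rpow_le_rpow (by linarith) (by linarith) hq.le
  -- For `a < 0`: `φ a - φ b ≤ κ (b - a)` and `(a - b) ^ q = (κ (b - a)) ^ q`.
  have hφa : rpowMajorant q a = negRpowConst q * -a := by
    rw [rpowMajorant, abs_of_neg ha, max_eq_right (by nlinarith)]
  have hκ : 0 < negRpowConst q := by
    by_contra! hκ
    have : rpowMajorant q a ≤ 0 := by rw [hφa]; nlinarith
    linarith [rpowMajorant_nonneg q b]
  have hcos : max (cos (q * π)) 0 = cos (q * π) := by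
    refine max_eq_left (not_lt.1 fun hneg => ?_)
    have := rpow_pos_of_pos hκ q
    rw [negRpowConst_rpow hq.ne', max_eq_right hneg.le] at this
    exact lt_irrefl _ this
  have hle : rpowMajorant q a - rpowMajorant q b ≤ negRpowConst q * (b - a) := by
    have : negRpowConst q * -b ≤ negRpowConst q * |b| :=
      mul_le_mul_of_nonneg_left (neg_le_abs b) hκ0
    rw [hφa]
    linarith
  have hba : 0 < b - a := pos_of_mul_pos_right ((sub_pos.2 h).trans_le hle) hκ0
  calc (rpowMajorant q a - rpowMajorant q b) ^ q ≤ (negRpowConst q * (b - a)) ^ q :=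
        rpow_le_rpow (sub_pos.2 h).le hle hq.le
    _ = |a - b| ^ q * cos (q * π) := by
        rw [mul_rpow hκ0 hba.le, negRpowConst_rpow hq.ne', hcos, abs_sub_comm, abs_of_pos hba,
          mul_comm]
    _ = (a - b) ^ q := (rpow_of_neg (by linarith) q).symm

end RpowMajorant

section Weighted

variable {V : Type} (T : PTree V) (v μ : V → ℝ) (p : ℝ)

noncomputable def powMass (u : V → ℝ) : ℝ≥0∞ := ∑' j, ENNReal.ofReal (μ j * |u j| ^ p)

/-- `(I_i(u))⁻¹ ≤ M` with the division cleared. -/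
def IopBound (M : ℝ≥0∞) (u : V → ℝ) (i : V) : Prop :=
  ENNReal.ofReal (v i * (u i - u (T.par i)) ^ (p - 1)) ≤
    M * T.subtreeSum (fun j => ENNReal.ofReal (μ j * u j ^ (p - 1))) i

variable {T v μ p}

theorem ofReal_mul_le_ofReal_abs_mul {a : ℝ} (ha : 0 ≤ a) (b : ℝ) :
    ENNReal.ofReal (a * b) ≤ ENNReal.ofReal |b| * ENNReal.ofReal a := by
  rw [mul_comm (ENNReal.ofReal |b|), ← ENNReal.ofReal_mul ha]
  exact ENNReal.ofReal_le_ofReal (mul_le_mul_of_nonneg_left (le_abs_self b) ha)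

theorem le_mul_of_inv_div_le {a b M : ℝ≥0∞} (ha : a ≠ ⊤) (hM0 : M ≠ 0) (hMtop : M ≠ ⊤)
    (h : (b / a)⁻¹ ≤ M) : a ≤ M * b := by
  have hb : b ≠ 0 := by
    rintro rfl
    rw [ENNReal.zero_div, ENNReal.inv_zero, top_le_iff] at h
    exact hMtop h
  rw [ENNReal.inv_div (Or.inl ha) (Or.inr hb)] at h
  exact (ENNReal.div_le_iff_le_mul (Or.inl hb) (Or.inr hM0)).1 h

theorem le_of_forall_le_add_div {a b C : ℝ≥0∞} (hC : C ≠ ⊤)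
    (h : ∀ n : ℕ, a ≤ b + C / (n + 1)) : a ≤ b := by
  have hlim : Tendsto (fun n : ℕ => b + C / (n + 1)) atTop (𝓝 b) := by
    have h1 : Tendsto (fun n : ℕ => ((n : ℝ≥0∞) + 1)⁻¹) atTop (𝓝 0) := by
      simpa [Function.comp_def] using
        ENNReal.tendsto_inv_nat_nhds_zero.comp (tendsto_add_atTop_nat 1)
    simpa [ENNReal.div_eq_inv_mul] using tendsto_const_nhds.add
      (ENNReal.Tendsto.mul_const h1 (Or.inr hC))
  exact ge_of_tendsto' hlim h

theorem lamP_le_Dp_div_powMass (hp : p ≠ 0) {u : V → ℝ} (hu0 : u T.root = 0)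
    (h0 : powMass μ p u ≠ 0) (htop : powMass μ p u ≠ ⊤) :
    lamP T v μ p ≤ Dp T v p u / powMass μ p u := by
  set X := powMass μ p u
  set c : ℝ := X.toReal ^ (-p⁻¹)
  have hc : 0 ≤ c := rpow_nonneg ENNReal.toReal_nonneg _
  have hcX : ENNReal.ofReal (c ^ p) = X⁻¹ := by
    rw [← rpow_mul ENNReal.toReal_nonneg, neg_mul, inv_mul_cancel₀ hp, rpow_neg_one,
      ENNReal.ofReal_inv_of_pos (ENNReal.toReal_pos h0 htop), ENNReal.ofReal_toReal htop]
  have hscale : ∀ a t : ℝ,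
      ENNReal.ofReal (a * |c * t| ^ p) = X⁻¹ * ENNReal.ofReal (a * |t| ^ p) := by
    intro a t
    rw [← hcX, ← ENNReal.ofReal_mul (rpow_nonneg hc p), abs_mul, abs_of_nonneg hc,
      mul_rpow hc (abs_nonneg t), mul_left_comm]
  have hmass : ∑' j, ENNReal.ofReal (μ j * |c * u j| ^ p) = 1 := by
    simp_rw [hscale]
    rw [ENNReal.tsum_mul_left]
    exact ENNReal.inv_mul_cancel h0 htop
  have hD : Dp T v p (fun j => c * u j) = X⁻¹ * Dp T v p u := by
    simp_rw [Dp, ← mul_sub, hscale, ENNReal.tsum_mul_left]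
  calc lamP T v μ p ≤ Dp T v p (fun j => c * u j) :=
        (iInf_le _ _).trans ((iInf_le _ (by simp [hu0])).trans (iInf_le _ hmass))
    _ = Dp T v p u / X := by rw [hD, ENNReal.div_eq_inv_mul]

theorem Dp_le_sum_add_mul_powMass (hp : p ≠ 0) {u : V → ℝ} (hu0 : u T.root = 0)
    (hu : ∀ i, u (T.par i) ≤ u i) (B : Finset V) {M : ℝ≥0∞}
    (hB : ∀ i ∉ B, 0 < u i - u (T.par i) → IopBound T v μ p M u i) :
    Dp T v p u ≤ ∑ i ∈ B, ENNReal.ofReal (v i * (u i - u (T.par i)) ^ p) + M * powMass μ p u := by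
  set N := T.subtreeSum fun j => ENNReal.ofReal (μ j * u j ^ (p - 1))
  have hpt : ∀ i, ENNReal.ofReal (v i * |u i - u (T.par i)| ^ p) ≤
      (if i ∈ B then ENNReal.ofReal (v i * (u i - u (T.par i)) ^ p) else 0) +
        M * (ENNReal.ofReal (u i - u (T.par i)) * N i) := by
    intro i
    rw [abs_of_nonneg (sub_nonneg.2 (hu i))]
    by_cases hiB : i ∈ B
    · rw [if_pos hiB]
      exact le_self_add
    rw [if_neg hiB, zero_add]
    rcases (sub_nonneg.2 (hu i)).eq_or_lt with hd | hd
    · rw [← hd, zero_rpow hp, mul_zero, ENNReal.ofReal_zero]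
      exact zero_le
    calc ENNReal.ofReal (v i * (u i - u (T.par i)) ^ p)
        = ENNReal.ofReal (u i - u (T.par i)) *
            ENNReal.ofReal (v i * (u i - u (T.par i)) ^ (p - 1)) := by
          rw [← ENNReal.ofReal_mul hd.le, rpow_sub_one hd.ne']
          congr 1
          field_simp
      _ ≤ ENNReal.ofReal (u i - u (T.par i)) * (M * N i) := mul_le_mul_right (hB i hiB hd) _
      _ = M * (ENNReal.ofReal (u i - u (T.par i)) * N i) := mul_left_comm _ _ _
  have hparts : ∑' i, ENNReal.ofReal (u i - u (T.par i)) * N i = powMass μ p u := by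
    rw [T.tsum_ofReal_sub_par_mul_subtreeSum hu, powMass]
    refine tsum_congr fun j => ?_
    have huj : 0 ≤ u j := hu0 ▸ T.root_le_of_forall_par_le hu j
    rw [hu0, sub_zero, ← ENNReal.ofReal_mul huj, abs_of_nonneg huj, mul_left_comm,
      ← rpow_one_add' huj (by rwa [add_sub_cancel]), add_sub_cancel]
  calc Dp T v p u ≤ ∑' i, ENNReal.ofReal (v i * |u i - u (T.par i)| ^ p) :=
        ENNReal.tsum_comp_le_tsum_of_injective Subtype.val_injective
          (fun i => ENNReal.ofReal (v i * |u i - u (T.par i)| ^ p))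
    _ ≤ ∑' i, ((if i ∈ B then ENNReal.ofReal (v i * (u i - u (T.par i)) ^ p) else 0) +
          M * (ENNReal.ofReal (u i - u (T.par i)) * N i)) := ENNReal.tsum_le_tsum hpt
    _ = ∑ i ∈ B, ENNReal.ofReal (v i * (u i - u (T.par i)) ^ p) + M * powMass μ p u := by
        rw [ENNReal.tsum_add, tsum_eq_sum (s := B) fun i hi => if_neg hi,
          Finset.sum_congr rfl fun i hi => if_pos hi, ENNReal.tsum_mul_left, hparts]

theorem lamP_le_add_div_powMass (hp : p ≠ 0) {u : V → ℝ} (hu0 : u T.root = 0)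
    (hu : ∀ i, u (T.par i) ≤ u i) (B : Finset V) {M : ℝ≥0∞}
    (hB : ∀ i ∉ B, 0 < u i - u (T.par i) → IopBound T v μ p M u i)
    (h0 : powMass μ p u ≠ 0) (htop : powMass μ p u ≠ ⊤) :
    lamP T v μ p ≤
      M + (∑ i ∈ B, ENNReal.ofReal (v i * (u i - u (T.par i)) ^ p)) / powMass μ p u :=
  calc lamP T v μ p ≤ Dp T v p u / powMass μ p u :=
        lamP_le_Dp_div_powMass hp hu0 h0 htop
    _ ≤ (∑ i ∈ B, ENNReal.ofReal (v i * (u i - u (T.par i)) ^ p) + M * powMass μ p u) /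
          powMass μ p u := ENNReal.div_le_div_right (Dp_le_sum_add_mul_powMass hp hu0 hu B hB) _
    _ = M + (∑ i ∈ B, ENNReal.ofReal (v i * (u i - u (T.par i)) ^ p)) / powMass μ p u := by
        rw [ENNReal.add_div, ENNReal.mul_div_cancel_right h0 htop, add_comm]

theorem IopBound_restrictIncr {g : V → ℝ} {A : Set V} {M : ℝ≥0∞} {i : V} (hiA : i ∈ A)
    (hV : ∀ j, T.anc i j → T.restrictIncr g A j = g j) (h : IopBound T v μ p M g i) :
    IopBound T v μ p M (T.restrictIncr g A) i := by
  rw [IopBound, T.restrictIncr_sub_par, if_pos hiA,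
    T.subtreeSum_congr fun j hij => by rw [hV j hij]]
  exact h

theorem powMass_le_add_sum_subtreeSum (hp : 0 ≤ p) (hμ : ∀ j, 0 ≤ μ j) {u g : V → ℝ} {G : ℝ}
    {ι : Type*} (s : Finset ι) (c : ι → V) (hin : ∀ a ∈ s, ∀ j, T.anc (c a) j → u j = g j)
    (hout : ∀ j, (∀ a ∈ s, ¬ T.anc (c a) j) → |u j| ≤ G) :
    powMass μ p u ≤ ENNReal.ofReal (G ^ p) * ∑' j, ENNReal.ofReal (μ j) +
      ∑ a ∈ s, T.subtreeSum (fun j => ENNReal.ofReal (μ j * |g j| ^ p)) (c a) := by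
  rw [powMass, ← ENNReal.tsum_mul_left]
  refine T.tsum_le_tsum_add_sum_subtreeSum s c
    (fun a ha j haj => by simp only [hin a ha j haj, le_rfl]) fun j hj => ?_
  have hG : 0 ≤ G := (abs_nonneg _).trans (hout j hj)
  calc ENNReal.ofReal (μ j * |u j| ^ p) ≤ ENNReal.ofReal (μ j * G ^ p) :=
        ENNReal.ofReal_le_ofReal <|
          mul_le_mul_of_nonneg_left (rpow_le_rpow (abs_nonneg _) (hout j hj) hp) (hμ j)
    _ = ENNReal.ofReal (G ^ p) * ENNReal.ofReal (μ j) := by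
        rw [mul_comm, ENNReal.ofReal_mul (rpow_nonneg hG p)]

end Weighted

section Majorant

variable {V : Type} {T : PTree V} {v μ : V → ℝ} {p : ℝ}

theorem subtreeSum_le_subtreeSum_pathMax (hp : 1 < p) (hμ : ∀ j, 0 ≤ μ j) (f : V → ℝ) (i : V) :
    T.subtreeSum (fun j => ENNReal.ofReal (μ j * f j ^ (p - 1))) i ≤
      T.subtreeSum (fun j => ENNReal.ofReal
        (μ j * T.pathMax (rpowMajorant (p - 1) ∘ f) j ^ (p - 1))) i :=
  ENNReal.tsum_le_tsum fun j => ENNReal.ofReal_le_ofReal <| mul_le_mul_of_nonneg_left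
    (rpow_le_rpow_of_rpowMajorant_le (by linarith)
      (T.le_pathMax (rpowMajorant (p - 1) ∘ f) (T.anc_refl j))) (hμ j)

theorem IopBound_pathMax (hp : 1 < p) (hv : ∀ i, 0 ≤ v i) (hμ : ∀ j, 0 ≤ μ j) {M : ℝ≥0∞}
    {f : V → ℝ} (hf : ∀ i, i ≠ T.root → IopBound T v μ p M f i) {i : V}
    (hi : 0 < T.pathMax (rpowMajorant (p - 1) ∘ f) i -
      T.pathMax (rpowMajorant (p - 1) ∘ f) (T.par i)) :
    IopBound T v μ p M (T.pathMax (rpowMajorant (p - 1) ∘ f)) i := by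
  set g := T.pathMax (rpowMajorant (p - 1) ∘ f)
  have hq : 0 < p - 1 := by linarith
  have hir : i ≠ T.root := by
    rintro rfl
    rw [T.par_root, sub_self] at hi
    exact lt_irrefl _ hi
  have hgi : g i = rpowMajorant (p - 1) (f i) := T.pathMax_eq_of_par_lt _ (sub_pos.1 hi)
  have hgpar : rpowMajorant (p - 1) (f (T.par i)) ≤ g (T.par i) :=
    T.le_pathMax (rpowMajorant (p - 1) ∘ f) (T.anc_refl _)
  have hjump : (g i - g (T.par i)) ^ (p - 1) ≤ (f i - f (T.par i)) ^ (p - 1) :=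
    (rpow_le_rpow hi.le (by linarith) hq.le).trans
      (rpowMajorant_sub_rpow_le hq (by linarith))
  calc ENNReal.ofReal (v i * (g i - g (T.par i)) ^ (p - 1))
      ≤ ENNReal.ofReal (v i * (f i - f (T.par i)) ^ (p - 1)) :=
        ENNReal.ofReal_le_ofReal (mul_le_mul_of_nonneg_left hjump (hv i))
    _ ≤ _ := hf i hir
    _ ≤ _ := mul_le_mul_right (subtreeSum_le_subtreeSum_pathMax hp hμ f i) _

theorem powMass_ne_zero_of_subtreeSum_ne_zero (hp : p ≠ 1) (hμ : ∀ j, 0 < μ j) {u : V → ℝ}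
    {i : V} (h : T.subtreeSum (fun j => ENNReal.ofReal (μ j * u j ^ (p - 1))) i ≠ 0) :
    powMass μ p u ≠ 0 := by
  obtain ⟨j, hj⟩ : ∃ j : {j : V // T.anc i j}, ENNReal.ofReal (μ j * u j ^ (p - 1)) ≠ 0 := by
    by_contra! h'
    exact h (ENNReal.tsum_eq_zero.2 h')
  have hu : u j ≠ 0 := by
    intro hz
    rw [hz, zero_rpow (sub_ne_zero.2 hp), mul_zero, ENNReal.ofReal_zero] at hj
    exact hj rfl
  rw [powMass, Ne, ENNReal.tsum_eq_zero, not_forall]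
  exact ⟨j, (ENNReal.ofReal_pos.2 (mul_pos (hμ j) (rpow_pos_of_pos (abs_pos.2 hu) p))).ne'⟩

end Majorant

section InfiniteMass

variable {V : Type} {T : PTree V} {v μ : V → ℝ} {p : ℝ}

theorem lamP_le_add_div_sum_children (hp : 0 < p) (hμ : ∀ j, 0 ≤ μ j)
    (hmass : ∑' j, ENNReal.ofReal (μ j) ≠ ⊤) {g : V → ℝ} (hg0 : g T.root = 0)
    (hg : ∀ i, g (T.par i) ≤ g i) {M : ℝ≥0∞}
    (hM : ∀ i, 0 < g i - g (T.par i) → IopBound T v μ p M g i) {x : V}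
    (hchild : ∀ c, T.par c = x → c ≠ x →
      T.subtreeSum (fun j => ENNReal.ofReal (μ j * |g j| ^ p)) c ≠ ⊤)
    (s : Finset {c : V // T.par c = x ∧ c ≠ x})
    (hs : ∑ c ∈ s, T.subtreeSum (fun j => ENNReal.ofReal (μ j * |g j| ^ p)) c ≠ 0) :
    lamP T v μ p ≤ M + (∑ i ∈ T.ancFinset x, ENNReal.ofReal (v i * (g i - g (T.par i)) ^ p)) /
      ∑ c ∈ s, T.subtreeSum (fun j => ENNReal.ofReal (μ j * |g j| ^ p)) c := by
  set F : V → ℝ≥0∞ := fun j => ENNReal.ofReal (μ j * |g j| ^ p)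
  set A : Set V := {a | T.anc a x} ∪ {a | ∃ c ∈ s, T.anc c.1 a}
  set u := T.restrictIncr g A
  have hincr := T.restrictIncr_sub_par g A
  have hu : ∀ i, u (T.par i) ≤ u i := T.restrictIncr_par_le hg A
  have hu0 : u T.root = 0 := T.restrictIncr_root g A
  have hug : ∀ c ∈ s, ∀ j, T.anc c.1 j → u j = g j := fun c hc j hcj =>
    (T.restrictIncr_eq_of_anc (A := A) (fun a ha => Or.inl (c.2.1 ▸ ha))
      (fun a ha => Or.inr ⟨c, hc, ha⟩) hcj).trans (by rw [hg0, sub_zero])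
  have hB : ∀ i ∉ T.ancFinset x, 0 < u i - u (T.par i) → IopBound T v μ p M u i := by
    intro i hix hi
    rw [hincr] at hi
    split_ifs at hi with hiA
    · obtain ⟨c, hc, hci⟩ := hiA.resolve_left (mt T.mem_ancFinset.2 hix)
      exact IopBound_restrictIncr hiA (fun j hij => hug c hc j (T.anc_trans hci hij)) (hM i hi)
    · exact absurd hi (lt_irrefl 0)
  have hX_ge : ∑ c ∈ s, T.subtreeSum F c ≤ powMass μ p u :=
    T.sum_subtreeSum_le_tsum s Subtype.val
      (fun c _ c' _ j h h' =>
        Subtype.ext (T.eq_of_anc_of_anc_of_par_eq c.2.1 c.2.2 c'.2.1 c'.2.2 h h'))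
      fun c hc j hcj => by simp only [F, hug c hc j hcj, le_rfl]
  have hX_le := powMass_le_add_sum_subtreeSum (G := g x) hp.le hμ s Subtype.val hug fun j hj => by
    have huj : 0 ≤ u j := hu0 ▸ T.root_le_of_forall_par_le hu j
    have hux := T.restrictIncr_le hg (A := A) (j := j) (x := x) fun a ha haj =>
      ha.elim id fun ⟨c, hc, hca⟩ => absurd (T.anc_trans hca haj) (hj c hc)
    rw [abs_of_nonneg huj]
    rwa [hg0, sub_zero] at hux
  have hX0 : powMass μ p u ≠ 0 := fun h => hs (le_antisymm (h ▸ hX_ge) zero_le)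
  have hXtop : powMass μ p u ≠ ⊤ := ne_top_of_le_ne_top (ENNReal.add_ne_top.2
    ⟨ENNReal.mul_ne_top ENNReal.ofReal_ne_top hmass, ENNReal.sum_ne_top.2
      fun (c : {c : V // T.par c = x ∧ c ≠ x}) _ => hchild c c.2.1 c.2.2⟩) hX_le
  have hpath : ∀ i ∈ T.ancFinset x, u i - u (T.par i) = g i - g (T.par i) := fun i hi =>
    (hincr i).trans (if_pos (show i ∈ A from Or.inl (T.mem_ancFinset.1 hi)))
  calc lamP T v μ p ≤ M + (∑ i ∈ T.ancFinset x, ENNReal.ofReal (v i * (u i - u (T.par i)) ^ p)) /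
        powMass μ p u := lamP_le_add_div_powMass hp.ne' hu0 hu _ hB hX0 hXtop
    _ ≤ _ := by
        rw [Finset.sum_congr rfl fun i hi => by rw [hpath i hi]]
        exact add_le_add_right (ENNReal.div_le_div_left hX_ge _) _

theorem lamP_le_of_powMass_eq_top (hp : 0 < p) (hμ : ∀ j, 0 ≤ μ j)
    (hmass : ∑' j, ENNReal.ofReal (μ j) ≠ ⊤) {g : V → ℝ} (hg0 : g T.root = 0)
    (hg : ∀ i, g (T.par i) ≤ g i) {K : ℕ} (hK : ∀ i, K < T.level i → g i = g (T.par i))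
    {M : ℝ≥0∞} (hM : ∀ i, 0 < g i - g (T.par i) → IopBound T v μ p M g i)
    (htop : powMass μ p g = ⊤) : lamP T v μ p ≤ M := by
  set F : V → ℝ≥0∞ := fun j => ENNReal.ofReal (μ j * |g j| ^ p)
  obtain ⟨x, hx, hchild⟩ := T.exists_subtreeSum_eq_top_forall_child_ne_top (F := F) (K := K)
    (fun y hy => T.subtreeSum_ne_top_of_le_mul hmass ENNReal.ofReal_ne_top fun j hyj => by
      simp only [F, T.eq_of_anc_of_le_level hK hy hyj]
      exact ofReal_mul_le_ofReal_abs_mul (hμ j) _)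
    (by rw [T.subtreeSum_root]; exact htop)
  have hchildren : ∑' c : {c : V // T.par c = x ∧ c ≠ x}, T.subtreeSum F c = ⊤ := by
    have := T.subtreeSum_le_add_tsum_children F x
    rw [hx, top_le_iff, ENNReal.add_eq_top] at this
    exact this.resolve_left ENNReal.ofReal_ne_top
  refine le_of_forall_le_add_div
    (C := ∑ i ∈ T.ancFinset x, ENNReal.ofReal (v i * (g i - g (T.par i)) ^ p))
    (ENNReal.sum_ne_top.2 fun _ _ => ENNReal.ofReal_ne_top) fun n => ?_
  obtain ⟨s, hs⟩ : ∃ s : Finset {c : V // T.par c = x ∧ c ≠ x},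
      (n + 1 : ℝ≥0∞) < ∑ c ∈ s, T.subtreeSum F c := by
    have hlt : (n + 1 : ℝ≥0∞) < ∑' c : {c : V // T.par c = x ∧ c ≠ x}, T.subtreeSum F c := by
      rw [hchildren]
      exact ENNReal.add_lt_top.2 ⟨ENNReal.natCast_lt_top n, ENNReal.one_lt_top⟩
    rw [ENNReal.tsum_eq_iSup_sum] at hlt
    exact lt_iSup_iff.1 hlt
  exact (lamP_le_add_div_sum_children hp hμ hmass hg0 hg hM hchild s
    (zero_le.trans_lt hs).ne').trans (add_le_add_right (ENNReal.div_le_div_left hs.le _) _)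

end InfiniteMass

section Main

variable {V : Type} {T : PTree V} {v μ : V → ℝ} {p : ℝ}

theorem lamP_le_of_IopBound (hp : 0 < p) (hμ : ∀ j, 0 ≤ μ j)
    (hmass : ∑' j, ENNReal.ofReal (μ j) ≠ ⊤) {g : V → ℝ} (hg0 : g T.root = 0)
    (hg : ∀ i, g (T.par i) ≤ g i) {K : ℕ} (hK : ∀ i, K < T.level i → g i = g (T.par i))
    {M : ℝ≥0∞} (hM : ∀ i, 0 < g i - g (T.par i) → IopBound T v μ p M g i)
    (h0 : powMass μ p g ≠ 0) : lamP T v μ p ≤ M := by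
  by_cases htop : powMass μ p g = ⊤
  · exact lamP_le_of_powMass_eq_top hp hμ hmass hg0 hg hK hM htop
  · simpa using lamP_le_add_div_powMass hp.ne' hg0 hg ∅ (fun i _ => hM i) h0 htop

theorem IopBound_of_iSup_ne_top (hμ : ∀ j, 0 ≤ μ j) (hmass : ∑' j, ENNReal.ofReal (μ j) ≠ ⊤)
    {f : V → ℝ} {k : V} (hk : k ≠ T.root)
    (hdk : ENNReal.ofReal (v k * (f k - f (T.par k)) ^ (p - 1)) ≠ 0)
    (hfk : ∀ j, T.anc k j → f j = f k)
    (hM : ⨆ i : {i : V // i ≠ T.root}, (Iop T v μ p f i.1)⁻¹ ≠ ⊤) {i : V} (hi : i ≠ T.root) :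
    IopBound T v μ p (⨆ i : {i : V // i ≠ T.root}, (Iop T v μ p f i.1)⁻¹) f i := by
  have hNk : T.subtreeSum (fun j => ENNReal.ofReal (μ j * f j ^ (p - 1))) k ≠ ⊤ :=
    T.subtreeSum_ne_top_of_le_mul hmass ENNReal.ofReal_ne_top fun j hj => by
      rw [hfk j hj]
      exact ofReal_mul_le_ofReal_abs_mul (hμ j) _
  have hIk : Iop T v μ p f k ≠ ⊤ := (ENNReal.div_lt_top hNk hdk).ne
  have hM0 : (⨆ i : {i : V // i ≠ T.root}, (Iop T v μ p f i.1)⁻¹) ≠ 0 :=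
    ((ENNReal.inv_pos.2 hIk).trans_le
      (le_iSup (fun i : {i : V // i ≠ T.root} => (Iop T v μ p f i.1)⁻¹) ⟨k, hk⟩)).ne'
  exact le_mul_of_inv_div_le ENNReal.ofReal_ne_top hM0 hM
    (le_iSup (fun i : {i : V // i ≠ T.root} => (Iop T v μ p f i.1)⁻¹) ⟨i, hi⟩)

end Main

/-- Upper bound half of the single-summation variational formula:
for `f ∈ 𝔉̃_I`, `λ_p ≤ sup_{i ≠ o} I_i(f)⁻¹`. -/
theorem lamP_le_sup_Iop_inv {V : Type} (T : PTree V) (v μ : V → ℝ) (p : ℝ)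
    (hp : 1 < p) (hv : ∀ i, 0 < v i) (hμ : ∀ i, 0 < μ i)
    (hmass : (∑' k : V, ENNReal.ofReal (μ k)) ≠ ⊤)
    (f : V → ℝ) (hf0 : f T.root = 0)
    (hf : ∃ k, k ≠ T.root ∧
      (∀ i, i ≠ T.root → T.anc i k → f (T.par i) < f i) ∧
      (∀ i, T.level k < T.level i → f i = f (T.par i))) :
    lamP T v μ p ≤ ⨆ i : {i : V // i ≠ T.root}, (Iop T v μ p f i.1)⁻¹ := by
  obtain ⟨k, hk, hf1, hf2⟩ := hf
  set M := ⨆ i : {i : V // i ≠ T.root}, (Iop T v μ p f i.1)⁻¹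
  rcases eq_or_ne M ⊤ with hM | hM
  · exact hM ▸ le_top
  have hμ' : ∀ j, 0 ≤ μ j := fun j => (hμ j).le
  have hdk : ENNReal.ofReal (v k * (f k - f (T.par k)) ^ (p - 1)) ≠ 0 :=
    (ENNReal.ofReal_pos.2 (mul_pos (hv k)
      (rpow_pos_of_pos (sub_pos.2 (hf1 k hk (T.anc_refl k))) _))).ne'
  have hf' : ∀ i, i ≠ T.root → IopBound T v μ p M f i := fun i =>
    IopBound_of_iSup_ne_top hμ' hmass hk hdk (fun j => T.eq_of_anc_of_le_level hf2 le_rfl) hM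
  have hNk : T.subtreeSum (fun j => ENNReal.ofReal (μ j * f j ^ (p - 1))) k ≠ 0 := by
    intro h0
    have := hf' k hk
    rw [IopBound, h0, mul_zero, nonpos_iff_eq_zero] at this
    exact hdk this
  set g := T.pathMax (rpowMajorant (p - 1) ∘ f)
  refine lamP_le_of_IopBound (by linarith) hμ' hmass (g := g) (K := T.level k) ?_
    (T.pathMax_par_le _)
    (fun i hi => T.pathMax_eq_par_of_eq_par _ (congrArg (rpowMajorant (p - 1)) (hf2 i hi)))
    (fun i hi => IopBound_pathMax hp (fun i => (hv i).le) hμ' hf' hi)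
    (powMass_ne_zero_of_subtreeSum_ne_zero hp.ne' (T := T) hμ (i := k)
      ((pos_iff_ne_zero.2 hNk).trans_le (subtreeSum_le_subtreeSum_pathMax hp hμ' f k)).ne')
  simp [g, T.pathMax_root, rpowMajorant, hf0]
end

section
/- Let T be a locally finite rooted tree with Σ_k μ_k < ∞ and p > 1. For any w : V → (1, ∞] with w_o = ∞ and w_i > 1 for all i ≠ o (w ∈ 𝒲), one has λ_p ≥ inf_{i ∈ V\{o}} R_i(w), where R_i(w) = μ_i^{-1}[ v_i (1 - w_i^{-1})^{p-1} - Σ_{j ∈ J(i)} v_j (w_j - 1)^{p-1} ]. -/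
open scoped ENNReal Classical BigOperators

/-- The difference-form operator
`R_i(w) = μ_i⁻¹ [ v_i (1 - w_i⁻¹)^{p-1} - Σ_{j ∈ J(i)} v_j (w_j - 1)^{p-1} ]`. -/
noncomputable def Rop {V : Type} (T : PTree V)
    (hfin : ∀ i : V, {j : V | T.par j = i ∧ j ≠ T.root}.Finite)
    (v μ : V → ℝ) (p : ℝ) (w : V → ℝ) (i : V) : ℝ :=
  (μ i)⁻¹ * (v i * (1 - (w i)⁻¹) ^ (p - 1)
    - ∑ j ∈ (hfin i).toFinset, v j * (w j - 1) ^ (p - 1))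

/-!
For `k ≠ o`, convexity of `x ↦ x ^ p` with the weights `1 - w_k⁻¹` and `w_k⁻¹` gives
`(1 - w_k⁻¹)^(p-1) |f_k|^p ≤ |f_k - f_{k*}|^p + (w_k - 1)^(p-1) |f_{k*}|^p`.
Multiplied by `v_k` and rewritten with `R_k(w)`, this reads
`R_k(w) μ_k |f_k|^p + ∑_{j ∈ J(k)} β_j ≤ v_k |f_k - f_{k*}|^p + β_k` with
`β_j = v_j (w_j - 1)^(p-1) |f_{j*}|^p`. Summed over a finite set of vertices closed under taking
parents, the `β`-terms cancel, because every vertex `≠ o` is a child of its parent and `β_o = 0`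
as `f_o = 0`. This leaves `(inf R(w)) μ(|f|^p) ≤ D_p(f)`.
-/

lemma add_rpow_le_of_add_eq_one {p a b x y : ℝ} (hp : 1 ≤ p) (hx : 0 ≤ x) (hy : 0 ≤ y)
    (ha : 0 < a) (hb : 0 < b) (hab : a + b = 1) :
    (x + y) ^ p ≤ a ^ (1 - p) * x ^ p + b ^ (1 - p) * y ^ p := by
  have h := (convexOn_rpow hp).2 (Set.mem_Ici.2 (div_nonneg hx ha.le))
    (Set.mem_Ici.2 (div_nonneg hy hb.le)) ha.le hb.le hab
  simp only [smul_eq_mul, mul_div_cancel₀ _ ha.ne', mul_div_cancel₀ _ hb.ne'] at h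
  rw [Real.div_rpow hx ha.le, Real.div_rpow hy hb.le] at h
  refine h.trans (le_of_eq ?_)
  rw [Real.rpow_sub ha, Real.rpow_sub hb, Real.rpow_one, Real.rpow_one]
  ring

lemma one_sub_inv_rpow_mul_abs_rpow_le {p t : ℝ} (hp : 1 ≤ p) (ht : 1 < t) (a b : ℝ) :
    (1 - t⁻¹) ^ (p - 1) * |a| ^ p ≤ |a - b| ^ p + (t - 1) ^ (p - 1) * |b| ^ p := by
  have ht0 : 0 < t := by linarith
  have hl : 0 < 1 - t⁻¹ := sub_pos.2 (inv_lt_one_of_one_lt₀ ht)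
  have htri : |a| ^ p ≤ (|a - b| + |b|) ^ p :=
    Real.rpow_le_rpow (abs_nonneg a) (by simpa using abs_add_le (a - b) b) (by linarith)
  have hconv := add_rpow_le_of_add_eq_one hp (abs_nonneg (a - b)) (abs_nonneg b) hl
    (inv_pos.2 ht0) (sub_add_cancel 1 t⁻¹)
  have hcancel : (1 - t⁻¹) ^ (p - 1) * (1 - t⁻¹) ^ (1 - p) = 1 := by
    rw [← Real.rpow_add hl]; norm_num
  have hratio : (1 - t⁻¹) ^ (p - 1) * t⁻¹ ^ (1 - p) = (t - 1) ^ (p - 1) := by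
    rw [show 1 - p = -(p - 1) by ring, Real.rpow_neg (inv_nonneg.2 ht0.le),
      Real.inv_rpow ht0.le, inv_inv, ← Real.mul_rpow hl.le ht0.le]
    congr 1
    field_simp
  calc (1 - t⁻¹) ^ (p - 1) * |a| ^ p
      ≤ (1 - t⁻¹) ^ (p - 1) * ((1 - t⁻¹) ^ (1 - p) * |a - b| ^ p + t⁻¹ ^ (1 - p) * |b| ^ p) := by
        gcongr
        exact htri.trans hconv
    _ = |a - b| ^ p + (t - 1) ^ (p - 1) * |b| ^ p := by
        rw [mul_add, ← mul_assoc, ← mul_assoc, hcancel, hratio, one_mul]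

namespace PTree

variable {V : Type} (T : PTree V)

lemma exists_superset_par_mem (F : Finset V) :
    ∃ F' : Finset V, F ⊆ F' ∧ ∀ k ∈ F', T.par k ∈ F' := by
  refine ⟨F.biUnion fun k => (Finset.range (T.level k + 1)).image fun m => T.par^[m] k,
    fun k hk => Finset.mem_biUnion.2 ⟨k, hk, Finset.mem_image.2 ⟨0, by simp, rfl⟩⟩, ?_⟩
  intro j hj
  obtain ⟨k, hk, hjk⟩ := Finset.mem_biUnion.1 hj
  obtain ⟨m, hm, rfl⟩ := Finset.mem_image.1 hjk
  rcases Nat.lt_or_ge m (T.level k) with hlt | hge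
  · refine Finset.mem_biUnion.2 ⟨k, hk, Finset.mem_image.2 ⟨m + 1, by simpa using hlt, ?_⟩⟩
    rw [Function.iterate_succ_apply']
  · have hm : m = T.level k := by simp at hm; omega
    subst hm
    rw [T.par_iter_root] at hj ⊢
    rwa [T.par_root]

variable (hfin : ∀ i : V, {j : V | T.par j = i ∧ j ≠ T.root}.Finite)

lemma sum_le_sum_sum_children {M : Type*} [AddCommMonoid M] [PartialOrder M]
    [CanonicallyOrderedAdd M] {F : Finset V} (hF : ∀ k ∈ F, T.par k ∈ F) {β : V → M}
    (hβ : β T.root = 0) :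
    ∑ k ∈ F, β k ≤ ∑ k ∈ F, ∑ j ∈ (hfin k).toFinset, β j := by
  have hdisj : (F : Set V).PairwiseDisjoint fun k => (hfin k).toFinset := by
    intro x _ y _ hxy
    refine Finset.disjoint_left.2 fun j hjx hjy => hxy ?_
    rw [← ((hfin x).mem_toFinset.1 hjx).1, ← ((hfin y).mem_toFinset.1 hjy).1]
  calc ∑ k ∈ F, β k = ∑ k ∈ F.erase T.root, β k := (Finset.sum_erase F hβ).symm
    _ ≤ ∑ j ∈ F.biUnion fun k => (hfin k).toFinset, β j := by
        refine Finset.sum_le_sum_of_subset fun k hk => ?_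
        obtain ⟨hk_root, hkF⟩ := Finset.mem_erase.1 hk
        exact Finset.mem_biUnion.2 ⟨T.par k, hF k hkF, (hfin _).mem_toFinset.2 ⟨rfl, hk_root⟩⟩
    _ = ∑ k ∈ F, ∑ j ∈ (hfin k).toFinset, β j := Finset.sum_biUnion hdisj

variable {c : ℝ≥0∞} {n g β : V → ℝ≥0∞}

lemma mul_sum_le_sum_of_le {F : Finset V} (hF : ∀ k ∈ F, T.par k ∈ F) (hβ_top : ∀ k, β k ≠ ∞)
    (hβ_root : β T.root = 0) (h : ∀ k, c * n k + ∑ j ∈ (hfin k).toFinset, β j ≤ g k + β k) :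
    c * ∑ k ∈ F, n k ≤ ∑ k ∈ F, g k := by
  set B := ∑ k ∈ F, ∑ j ∈ (hfin k).toFinset, β j
  have hB : B ≠ ∞ := ENNReal.sum_ne_top.2 fun k _ => ENNReal.sum_ne_top.2 fun j _ => hβ_top j
  refine (ENNReal.add_le_add_iff_right hB).1 ?_
  calc c * ∑ k ∈ F, n k + B ≤ ∑ k ∈ F, g k + ∑ k ∈ F, β k := by
        rw [Finset.mul_sum, ← Finset.sum_add_distrib, ← Finset.sum_add_distrib]
        exact Finset.sum_le_sum fun k _ => h k
    _ ≤ ∑ k ∈ F, g k + B := by gcongr; exact T.sum_le_sum_sum_children hfin hF hβ_root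

lemma mul_tsum_le_tsum_of_le (hβ_top : ∀ k, β k ≠ ∞) (hβ_root : β T.root = 0)
    (h : ∀ k, c * n k + ∑ j ∈ (hfin k).toFinset, β j ≤ g k + β k) :
    c * ∑' k, n k ≤ ∑' k, g k := by
  rw [ENNReal.tsum_eq_iSup_sum, ENNReal.mul_iSup]
  refine iSup_le fun F => ?_
  obtain ⟨F', hFF', hF'⟩ := T.exists_superset_par_mem F
  calc c * ∑ k ∈ F, n k ≤ c * ∑ k ∈ F', n k := by gcongr
    _ ≤ ∑ k ∈ F', g k := T.mul_sum_le_sum_of_le hfin hF' hβ_top hβ_root h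
    _ ≤ ∑' k, g k := ENNReal.sum_le_tsum F'

end PTree


section Rop

variable {V : Type} (T : PTree V) (hfin : ∀ i : V, {j : V | T.par j = i ∧ j ≠ T.root}.Finite)
  {v μ : V → ℝ} {p : ℝ} {w f : V → ℝ}

lemma Rop_mul_add_sum_le {k : V} (hp : 1 ≤ p) (hv : 0 ≤ v k) (hμ : μ k ≠ 0) (hw : 1 < w k) :
    Rop T hfin v μ p w k * (μ k * |f k| ^ p)
        + ∑ j ∈ (hfin k).toFinset, v j * (w j - 1) ^ (p - 1) * |f (T.par j)| ^ p
      ≤ v k * |f k - f (T.par k)| ^ p + v k * (w k - 1) ^ (p - 1) * |f (T.par k)| ^ p := by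
  have hchildren : ∑ j ∈ (hfin k).toFinset, v j * (w j - 1) ^ (p - 1) * |f (T.par j)| ^ p
      = (∑ j ∈ (hfin k).toFinset, v j * (w j - 1) ^ (p - 1)) * |f k| ^ p := by
    rw [Finset.sum_mul]
    exact Finset.sum_congr rfl fun j hj => by rw [((hfin k).mem_toFinset.1 hj).1]
  have hlhs : Rop T hfin v μ p w k * (μ k * |f k| ^ p)
        + (∑ j ∈ (hfin k).toFinset, v j * (w j - 1) ^ (p - 1)) * |f k| ^ p
      = v k * ((1 - (w k)⁻¹) ^ (p - 1) * |f k| ^ p) := by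
    unfold Rop
    field_simp
    ring
  rw [hchildren, hlhs, mul_assoc, ← mul_add]
  exact mul_le_mul_of_nonneg_left (one_sub_inv_rpow_mul_abs_rpow_le hp hw _ _) hv

lemma mul_ofReal_add_sum_le {c : ℝ≥0∞} (hp : 1 ≤ p) (hv : ∀ i, 0 ≤ v i) (hμ : ∀ i, 0 < μ i)
    (hw : ∀ i, i ≠ T.root → 1 < w i) (hR : ∀ i, i ≠ T.root → 0 ≤ Rop T hfin v μ p w i)
    (hc : ∀ i, i ≠ T.root → c ≤ ENNReal.ofReal (Rop T hfin v μ p w i)) (hf0 : f T.root = 0)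
    (k : V) :
    c * ENNReal.ofReal (μ k * |f k| ^ p)
        + ∑ j ∈ (hfin k).toFinset,
            ENNReal.ofReal (v j * (w j - 1) ^ (p - 1) * |f (T.par j)| ^ p)
      ≤ ENNReal.ofReal (v k * |f k - f (T.par k)| ^ p)
        + ENNReal.ofReal (v k * (w k - 1) ^ (p - 1) * |f (T.par k)| ^ p) := by
  by_cases hk : k = T.root
  · subst hk
    have hzero : |f T.root| ^ p = 0 := by
      rw [hf0, abs_zero, Real.zero_rpow (by linarith)]
    have hchildren : ∀ j ∈ (hfin T.root).toFinset,
        ENNReal.ofReal (v j * (w j - 1) ^ (p - 1) * |f (T.par j)| ^ p) = 0 := fun j hj => by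
      rw [((hfin _).mem_toFinset.1 hj).1, hzero, mul_zero, ENNReal.ofReal_zero]
    rw [Finset.sum_eq_zero hchildren, hzero, mul_zero, ENNReal.ofReal_zero, mul_zero, add_zero]
    exact zero_le
  have hβ : ∀ i, i ≠ T.root → 0 ≤ v i * (w i - 1) ^ (p - 1) * |f (T.par i)| ^ p := fun i hi =>
    mul_nonneg (mul_nonneg (hv i) (Real.rpow_nonneg (sub_nonneg.2 (hw i hi).le) _))
      (Real.rpow_nonneg (abs_nonneg _) _)
  have hβ_children := fun j hj => hβ j ((hfin k).mem_toFinset.1 hj).2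
  calc _ ≤ ENNReal.ofReal (Rop T hfin v μ p w k) * ENNReal.ofReal (μ k * |f k| ^ p)
          + ∑ j ∈ (hfin k).toFinset,
              ENNReal.ofReal (v j * (w j - 1) ^ (p - 1) * |f (T.par j)| ^ p) := by
        gcongr
        exact hc k hk
    _ ≤ _ := by
        rw [← ENNReal.ofReal_mul (hR k hk), ← ENNReal.ofReal_sum_of_nonneg hβ_children,
          ← ENNReal.ofReal_add (mul_nonneg (hR k hk) (mul_nonneg (hμ k).le (by positivity)))
            (Finset.sum_nonneg hβ_children),
          ← ENNReal.ofReal_add (mul_nonneg (hv k) (by positivity)) (hβ k hk)]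
        exact ENNReal.ofReal_le_ofReal
          (Rop_mul_add_sum_le T hfin hp (hv k) (hμ k).ne' (hw k hk))

end Rop

lemma tsum_ofReal_eq_Dp {V : Type} (T : PTree V) (v : V → ℝ) {p : ℝ} (hp : p ≠ 0) (f : V → ℝ) :
    ∑' k, ENNReal.ofReal (v k * |f k - f (T.par k)| ^ p) = Dp T v p f := by
  have hsupp : Function.support (fun k => ENNReal.ofReal (v k * |f k - f (T.par k)| ^ p))
      ⊆ {k | k ≠ T.root} := by
    intro k hk hroot
    apply hk
    simp [hroot, T.par_root, Real.zero_rpow hp]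
  exact (tsum_subtype_eq_of_support_subset hsupp).symm

theorem inf_Rop_le_lamP_general {V : Type} (T : PTree V)
    (hfin : ∀ i : V, {j : V | T.par j = i ∧ j ≠ T.root}.Finite)
    (v μ : V → ℝ) (p : ℝ) (hp : 1 < p)
    (hv : ∀ i, 0 < v i) (hμ : ∀ i, 0 < μ i)
    (w : V → ℝ) (hw : ∀ i, i ≠ T.root → 1 < w i) :
    (⨅ i : {i : V // i ≠ T.root}, ENNReal.ofReal (Rop T hfin v μ p w i.1))
      ≤ lamP T v μ p := by
  set c := ⨅ i : {i : V // i ≠ T.root}, ENNReal.ofReal (Rop T hfin v μ p w i.1)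
  by_cases hR : ∀ i, i ≠ T.root → 0 ≤ Rop T hfin v μ p w i
  swap
  · push Not at hR
    obtain ⟨i, hi, hRi⟩ := hR
    exact iInf_le_of_le ⟨i, hi⟩ (by rw [ENNReal.ofReal_eq_zero.2 hRi.le]; exact zero_le)
  refine le_iInf₂ fun f hf0 => le_iInf fun hnorm => ?_
  calc c = c * ∑' k, ENNReal.ofReal (μ k * |f k| ^ p) := by rw [hnorm, mul_one]
    _ ≤ ∑' k, ENNReal.ofReal (v k * |f k - f (T.par k)| ^ p) :=
      T.mul_tsum_le_tsum_of_le hfin (fun _ => ENNReal.ofReal_ne_top)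
        (by rw [T.par_root, hf0, abs_zero, Real.zero_rpow (by linarith), mul_zero,
          ENNReal.ofReal_zero])
        (mul_ofReal_add_sum_le T hfin hp.le (fun i => (hv i).le) hμ hw hR
          (fun i hi => iInf_le_of_le ⟨i, hi⟩ le_rfl) hf0)
    _ = Dp T v p f := tsum_ofReal_eq_Dp T v (by linarith) f

/-- Lower bound in difference form: for any `w ∈ 𝒲` (i.e. `w > 1` off the
root), `λ_p ≥ inf_{i ≠ o} R_i(w)`. -/
theorem inf_Rop_le_lamP {V : Type} (T : PTree V)
    (hfin : ∀ i : V, {j : V | T.par j = i ∧ j ≠ T.root}.Finite)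
    (v μ : V → ℝ) (p : ℝ) (hp : 1 < p)
    (hv : ∀ i, 0 < v i) (hμ : ∀ i, 0 < μ i)
    (hmass : (∑' k : V, ENNReal.ofReal (μ k)) ≠ ⊤)
    (w : V → ℝ) (hw : ∀ i, i ≠ T.root → 1 < w i) :
    (⨅ i : {i : V // i ≠ T.root}, ENNReal.ofReal (Rop T hfin v μ p w i.1))
      ≤ lamP T v μ p :=
  inf_Rop_le_lamP_general T hfin v μ p hp hv hμ w hw
end
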